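/- arXiv:1704.03540 — 6 statements merged into one kernel-verified Lean document; each statement's English description precedes it below -/
import Mathlib

section
/- For every i ∈ {1, …, p} and every t ∈ ℕ, the global model and the local model satisfy ‖x(t) − x^i(t)‖ ≤ Σ_{k=(t−s)_+}^{t−1} ‖x(k+1) − x(k)‖. -/
open Filter Topology

noncomputable abbrev EE (p : ℕ) (d : Fin p → ℕ) : Type :=
  PiLp 2 (fun i : Fin p => EuclideanSpace ℝ (Fin (d i)))
/-!
Each block of `x(t) - xⁱ(t)` is `x_j(t) - x_j(τ_j^i(t))`, which telescopes into the increments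
`x_j(k+1) - x_j(k)` for `τ_j^i(t) ≤ k < t`, a subrange of `[t - s, t)`. Hence `x(t) - xⁱ(t)` is the
sum over `k ∈ [t - s, t)` of the increments `x(k+1) - x(k)` with some blocks zeroed out, and
zeroing out blocks does not increase an `L^p` norm.
-/

open Finset

theorem Finset.sum_Ico_ite_sub {G : Type*} [AddCommGroup G] (f : ℕ → G) {a b c : ℕ}
    (hab : a ≤ b) (hbc : b ≤ c) :
    ∑ k ∈ Ico a c, (if b ≤ k then f (k + 1) - f k else 0) = f c - f b := by
  have hfilter : (Ico a c).filter (b ≤ ·) = Ico b c := by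
    ext k
    simp only [mem_filter, mem_Ico]
    omega
  rw [← sum_filter, hfilter, sum_Ico_sub f hbc]

namespace PiLp

variable {p : ENNReal} [Fact (1 ≤ p)] {ι : Type*} [Fintype ι] {β : ι → Type*}
  [∀ i, SeminormedAddCommGroup (β i)]

theorem norm_le_norm_of_forall_norm_apply_le {f g : PiLp p β} (h : ∀ i, ‖f i‖ ≤ ‖g i‖) :
    ‖f‖ ≤ ‖g‖ := by
  rcases p.dichotomy with rfl | hp
  · simp only [norm_eq_ciSup]
    exact ciSup_mono (Set.finite_range _).bddAbove h
  · have hp₀ : 0 < p.toReal := zero_lt_one.trans_le hp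
    rw [norm_eq_sum hp₀, norm_eq_sum hp₀]
    gcongr with i
    exact h i

theorem norm_sub_toLp_le_sum_Ico_norm_sub (f : ℕ → PiLp p β) (σ : ι → ℕ) {a t : ℕ}
    (ha : ∀ i, a ≤ σ i) (ht : ∀ i, σ i ≤ t) :
    ‖f t - WithLp.toLp p (fun i => f (σ i) i)‖ ≤ ∑ k ∈ Ico a t, ‖f (k + 1) - f k‖ := by
  set v : ℕ → PiLp p β := fun k =>
    WithLp.toLp p (fun i => if σ i ≤ k then (f (k + 1) - f k) i else 0)
  have hv : f t - WithLp.toLp p (fun i => f (σ i) i) = ∑ k ∈ Ico a t, v k := by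
    ext i
    simp only [v, WithLp.ofLp_sum, Finset.sum_apply, sub_apply,
      sum_Ico_ite_sub (f · i) (ha i) (ht i)]
  calc ‖f t - WithLp.toLp p (fun i => f (σ i) i)‖
      ≤ ∑ k ∈ Ico a t, ‖v k‖ := hv ▸ norm_sum_le _ _
    _ ≤ ∑ k ∈ Ico a t, ‖f (k + 1) - f k‖ := by
      refine sum_le_sum fun k _ => norm_le_norm_of_forall_norm_apply_le fun i => ?_
      simp only [v]
      split_ifs
      · exact le_rfl
      · simp

end PiLp

theorem stmt_0_general
    (p s : ℕ) (d : Fin p → ℕ)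
    (τ : Fin p → Fin p → ℕ → ℕ)
    (hτ_le : ∀ i j t, τ i j t ≤ t)
    (hτ_ge : ∀ i j t, t ≤ τ i j t + s)
    (x : (i : Fin p) → ℕ → EuclideanSpace ℝ (Fin (d i)))
    (X : ℕ → EE p d) (hX : ∀ t i, X t i = x i t)
    (Xl : Fin p → ℕ → EE p d) (hXl : ∀ i t j, Xl i t j = x j (τ i j t))
    :
    ∀ (i : Fin p) (t : ℕ),
      ‖X t - Xl i t‖ ≤ ∑ k ∈ Finset.Ico (t - s) t, ‖X (k + 1) - X k‖ := by
  intro i t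
  have hXl_eq : Xl i t = WithLp.toLp 2 (fun j => X (τ i j t) j) := by
    ext j
    simp only [hXl, hX]
  rw [hXl_eq]
  exact PiLp.norm_sub_toLp_le_sum_Ico_norm_sub X (τ i · t)
    (fun j => Nat.sub_le_of_le_add (hτ_ge i j t)) (hτ_le i · t)

theorem stmt_0
    (p s : ℕ) (hp : 1 ≤ p) (d : Fin p → ℕ) (hd : ∀ i, 1 ≤ d i)
    (τ : Fin p → Fin p → ℕ → ℕ)
    (hτ_le : ∀ i j t, τ i j t ≤ t)
    (hτ_ge : ∀ i j t, t ≤ τ i j t + s)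
    (hτ_self : ∀ i t, τ i i t = t)
    (x : (i : Fin p) → ℕ → EuclideanSpace ℝ (Fin (d i)))
    (X : ℕ → EE p d) (hX : ∀ t i, X t i = x i t)
    (Xl : Fin p → ℕ → EE p d) (hXl : ∀ i t j, Xl i t j = x j (τ i j t))
    :
    ∀ (i : Fin p) (t : ℕ),
      ‖X t - Xl i t‖ ≤ ∑ k ∈ Finset.Ico (t - s) t, ‖X (k + 1) - X k‖ :=
  stmt_0_general p s d τ hτ_le hτ_ge x X hX Xl hXl
end

section
/- If the step size satisfies 0 < η < 1/(L(1 + 2√p·s)), then the global sequence generated by m-PAPG has square-summable successive differences: Σ_{t=0}^{∞} ‖x(t+1) − x(t)‖^2 < ∞. -/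
/-!
The potential `Φ t = f (x t) + ∑ i, g_i (x_i t)` decreases up to a delay error. The descent lemma
for `f` and the proximal inequality of each block (tested against the current point) give
`Φ (t+1) + A ‖Δ t‖² ≤ Φ t + B ∑_{t-s ≤ k < t} ‖Δ k‖²`, with `Δ t = x (t+1) - x t`: the stale
gradient of block `i` costs `L ‖x t - xⁱ t‖ ≤ L ∑_{t-s ≤ k < t} ‖Δ k‖`, the blocks are summed by
Cauchy–Schwarz (factor `√p`) and the product is split by AM–GM. Summing over `t`, each `‖Δ k‖²` is
charged at most `s` times, so `(A - B s) ∑ ‖Δ t‖² ≤ Φ 0 - inf F`, and `A - B s > 0` is exactly the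
step-size condition.
-/

open Filter Topology

open Finset
open scoped RealInnerProductSpace

theorem EReal.coe_finset_sum {ι : Type*} (s : Finset ι) (a : ι → ℝ) :
    ((∑ i ∈ s, a i : ℝ) : EReal) = ∑ i ∈ s, (a i : EReal) :=
  map_sum (⟨⟨Real.toEReal, EReal.coe_zero⟩, EReal.coe_add⟩ : ℝ →+ EReal) a s

theorem EReal.ne_top_of_sum_ne_top {ι : Type*} [DecidableEq ι] {s : Finset ι} {a : ι → EReal}
    (hbot : ∀ i, a i ≠ ⊥) (hsum : ∑ j ∈ s, a j ≠ ⊤) {i : ι} (hi : i ∈ s) : a i ≠ ⊤ := by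
  have hrest : ∑ j ∈ s.erase i, a j ≠ ⊥ :=
    sum_induction a (· ≠ ⊥) (fun _ _ hx hy => EReal.add_ne_bot_iff.2 ⟨hx, hy⟩)
      EReal.zero_ne_bot fun j _ => hbot j
  rw [← add_sum_erase s a hi] at hsum
  exact ((EReal.add_ne_top_iff_ne_top₂ (hbot i) hrest).1 hsum).1

theorem image_le_add_inner_add_sq_of_lipschitz_gradient {E : Type*} [NormedAddCommGroup E]
    [InnerProductSpace ℝ E] [CompleteSpace E] {f : E → ℝ} {f' : E → E} {L : ℝ}
    (hf : ∀ y, HasGradientAt f (f' y) y) (hlip : ∀ y z, ‖f' y - f' z‖ ≤ L * ‖y - z‖) (a b : E) :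
    f b ≤ f a + ⟪f' a, b - a⟫ + L / 2 * ‖b - a‖ ^ 2 := by
  set v := b - a
  -- the defect `φ u` of the quadratic upper model along the segment is antitone for `u ≥ 0`
  set φ : ℝ → ℝ := fun u => f (a + u • v) - u * ⟪f' a, v⟫ - L / 2 * u ^ 2 * ‖v‖ ^ 2
  set φ' : ℝ → ℝ := fun u => ⟪f' (a + u • v), v⟫ - ⟪f' a, v⟫ - L * u * ‖v‖ ^ 2
  have hderiv : ∀ u, HasDerivAt φ (φ' u) u := by
    intro u
    have hline : HasDerivAt (fun u : ℝ => a + u • v) v u := by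
      simpa using ((hasDerivAt_id u).smul_const v).const_add a
    have hfu := (hf (a + u • v)).hasFDerivAt.comp_hasDerivAt u hline
    have hsq := ((hasDerivAt_pow 2 u).const_mul (L / 2)).mul_const (‖v‖ ^ 2)
    refine ((hfu.sub ((hasDerivAt_id u).mul_const ⟪f' a, v⟫)).sub hsq).congr_deriv ?_
    simp only [φ', InnerProductSpace.toDual_apply_apply]
    ring
  have hanti : AntitoneOn φ (Set.Ici 0) := by
    refine antitoneOn_of_hasDerivWithinAt_nonpos (convex_Ici 0)
      (fun u _ => (hderiv u).continuousAt.continuousWithinAt)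
      (fun u _ => (hderiv u).hasDerivWithinAt) fun u hu => ?_
    rw [interior_Ici, Set.mem_Ioi] at hu
    have hgrad : ‖f' (a + u • v) - f' a‖ ≤ L * u * ‖v‖ := by
      simpa [norm_smul, abs_of_pos hu, mul_assoc] using hlip (a + u • v) a
    calc φ' u = ⟪f' (a + u • v) - f' a, v⟫ - L * u * ‖v‖ ^ 2 := by rw [inner_sub_left]
      _ ≤ ‖f' (a + u • v) - f' a‖ * ‖v‖ - L * u * ‖v‖ ^ 2 := by
        gcongr; exact real_inner_le_norm _ _
      _ ≤ 0 := by nlinarith [mul_le_mul_of_nonneg_right hgrad (norm_nonneg v)]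
  have h01 := hanti (Set.mem_Ici.2 le_rfl) (Set.mem_Ici.2 zero_le_one) zero_le_one
  simp only [φ, v, one_smul, add_sub_cancel, zero_smul, add_zero] at h01
  linarith

section Prox

variable {V : Type*} [NormedAddCommGroup V] [InnerProductSpace ℝ V]

noncomputable def proxObjective (g : V → EReal) (η : ℝ) (y v z : V) : EReal :=
  g z + ((1 / (2 * η) * ‖z - (y - η • v)‖ ^ 2 : ℝ) : EReal)

theorem add_inner_le_of_prox_le {a b η : ℝ} {v y y' : V} (hη : η ≠ 0)
    (h : a + 1 / (2 * η) * ‖y' - (y - η • v)‖ ^ 2 ≤ b + 1 / (2 * η) * ‖y - (y - η • v)‖ ^ 2) :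
    a + 1 / (2 * η) * ‖y' - y‖ ^ 2 + ⟪y' - y, v⟫ ≤ b := by
  have hexpand : ‖y' - (y - η • v)‖ ^ 2 = ‖y' - y‖ ^ 2 + 2 * η * ⟪y' - y, v⟫ + ‖η • v‖ ^ 2 := by
    rw [sub_sub_eq_add_sub, add_sub_right_comm, norm_add_sq_real, real_inner_smul_right]
    ring
  have hcancel : 1 / (2 * η) * (2 * η * ⟪y' - y, v⟫) = ⟪y' - y, v⟫ := by field_simp
  rw [hexpand, sub_sub_cancel, mul_add, mul_add, hcancel] at h
  linarith

variable {g : V → EReal} {η : ℝ}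

theorem ne_top_of_proxObjective_le {y v y' : V} (hy : g y ≠ ⊤)
    (h : proxObjective g η y v y' ≤ proxObjective g η y v y) : g y' ≠ ⊤ := by
  rintro hy'
  have hlt : proxObjective g η y v y < ⊤ := EReal.add_lt_top hy (EReal.coe_ne_top _)
  rw [proxObjective, hy', EReal.top_add_coe] at h
  exact hlt.not_ge h

theorem toReal_add_inner_le_of_proxObjective_le {y v y' : V} (hη : η ≠ 0) (hbot : ∀ z, g z ≠ ⊥)
    (hy : g y ≠ ⊤) (h : proxObjective g η y v y' ≤ proxObjective g η y v y) :
    (g y').toReal + 1 / (2 * η) * ‖y' - y‖ ^ 2 + ⟪y' - y, v⟫ ≤ (g y).toReal := by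
  have hy' := ne_top_of_proxObjective_le hy h
  refine add_inner_le_of_prox_le hη ?_
  rwa [proxObjective, proxObjective, ← EReal.coe_toReal hy (hbot y),
    ← EReal.coe_toReal hy' (hbot y'), ← EReal.coe_add,
    ← EReal.coe_add, EReal.coe_le_coe_iff] at h

variable {y v : ℕ → V}

theorem ne_top_of_stationary_or_proxObjective_le (h0 : g (y 0) ≠ ⊤)
    (hstep : ∀ t, y (t + 1) = y t ∨
      proxObjective g η (y t) (v t) (y (t + 1)) ≤ proxObjective g η (y t) (v t) (y t)) (t : ℕ) :
    g (y t) ≠ ⊤ := by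
  induction t with
  | zero => exact h0
  | succ t ih =>
    rcases hstep t with hfix | hprox
    · rwa [hfix]
    · exact ne_top_of_proxObjective_le ih hprox

theorem toReal_add_inner_le_of_stationary_or_proxObjective_le (hη : η ≠ 0)
    (hbot : ∀ z, g z ≠ ⊥) (h0 : g (y 0) ≠ ⊤)
    (hstep : ∀ t, y (t + 1) = y t ∨
      proxObjective g η (y t) (v t) (y (t + 1)) ≤ proxObjective g η (y t) (v t) (y t)) (t : ℕ) :
    (g (y (t + 1))).toReal + 1 / (2 * η) * ‖y (t + 1) - y t‖ ^ 2 + ⟪y (t + 1) - y t, v t⟫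
      ≤ (g (y t)).toReal := by
  rcases hstep t with hfix | hprox
  · simp [hfix]
  · exact toReal_add_inner_le_of_proxObjective_le hη hbot
      (ne_top_of_stationary_or_proxObjective_le h0 hstep t) hprox

end Prox

namespace PiLp

variable {ι : Type*} [Fintype ι] {β : ι → Type*}

theorem norm_le_norm_of_forall_norm_apply_le_s2 [∀ i, SeminormedAddCommGroup (β i)]
    {u v : PiLp 2 β} (h : ∀ i, ‖u i‖ ≤ ‖v i‖) : ‖u‖ ≤ ‖v‖ := by
  rw [norm_eq_of_L2, norm_eq_of_L2]
  gcongr with i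
  exact h i

theorem sum_norm_apply_le_sqrt_card_mul_norm [∀ i, SeminormedAddCommGroup (β i)]
    (v : PiLp 2 β) : ∑ i, ‖v i‖ ≤ √(Fintype.card ι) * ‖v‖ := by
  simpa [norm_eq_of_L2] using Real.sum_mul_le_sqrt_mul_sqrt univ (fun _ => 1) (fun i => ‖v i‖)

theorem sum_inner_apply_le [∀ i, NormedAddCommGroup (β i)] [∀ i, InnerProductSpace ℝ (β i)]
    {u : ι → PiLp 2 β} {v : PiLp 2 β} {K : ℝ} (hK : 0 ≤ K) (hu : ∀ i, ‖u i‖ ≤ K) :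
    ∑ i, ⟪u i i, v i⟫ ≤ K * √(Fintype.card ι) * ‖v‖ :=
  calc ∑ i, ⟪u i i, v i⟫ ≤ ∑ i, K * ‖v i‖ := by
        gcongr with i
        exact (real_inner_le_norm _ _).trans
          (mul_le_mul_of_nonneg_right ((norm_apply_le _ i).trans (hu i)) (norm_nonneg _))
    _ ≤ K * √(Fintype.card ι) * ‖v‖ := by
        rw [← mul_sum, mul_assoc]
        exact mul_le_mul_of_nonneg_left (sum_norm_apply_le_sqrt_card_mul_norm v) hK

theorem norm_sub_le_sum_Ico_norm_sub [∀ i, SeminormedAddCommGroup (β i)] (y : ℕ → PiLp 2 β)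
    {z : PiLp 2 β} {σ : ι → ℕ} {t s : ℕ} (hσ_le : ∀ j, σ j ≤ t) (hσ_ge : ∀ j, t ≤ σ j + s)
    (hz : ∀ j, z j = y (σ j) j) :
    ‖y t - z‖ ≤ ∑ k ∈ Ico (t - s) t, ‖y (k + 1) - y k‖ := by
  classical
  set w : ℕ → PiLp 2 β := fun k =>
    WithLp.toLp 2 fun j => if σ j ≤ k then (y (k + 1) - y k) j else 0
  have hw : y t - z = ∑ k ∈ Ico (t - s) t, w k := by
    ext j
    have hIco : (Ico (t - s) t).filter (σ j ≤ ·) = Ico (σ j) t := by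
      ext k; simp only [mem_filter, mem_Ico]; have := hσ_le j; have := hσ_ge j; omega
    simp only [WithLp.ofLp_sum, Finset.sum_apply, w, ← sum_filter, hIco, WithLp.ofLp_sub,
      Pi.sub_apply, hz]
    exact (sum_Ico_sub (fun k => y k j) (hσ_le j)).symm
  rw [hw]
  refine (norm_sum_le _ _).trans
    (sum_le_sum fun k _ => norm_le_norm_of_forall_norm_apply_le_s2 fun j => ?_)
  simp only [w]
  split_ifs <;> simp

end PiLp

theorem sum_mul_le_half_sum_sq_add {κ : Type*} {S : Finset κ} {s : ℕ} (hS : S.card ≤ s)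
    (a : κ → ℝ) (b : ℝ) :
    (∑ k ∈ S, a k) * b ≤ 1 / 2 * ∑ k ∈ S, a k ^ 2 + s / 2 * b ^ 2 :=
  calc (∑ k ∈ S, a k) * b ≤ ∑ k ∈ S, (1 / 2 * a k ^ 2 + 1 / 2 * b ^ 2) := by
        rw [sum_mul]
        gcongr with k
        nlinarith [sq_nonneg (a k - b)]
    _ = 1 / 2 * ∑ k ∈ S, a k ^ 2 + S.card / 2 * b ^ 2 := by
        rw [sum_add_distrib, ← mul_sum, sum_const, nsmul_eq_mul]; ring
    _ ≤ 1 / 2 * ∑ k ∈ S, a k ^ 2 + s / 2 * b ^ 2 := by gcongr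

theorem card_Ico_sub_le (t s : ℕ) : (Ico (t - s) t).card ≤ s := by
  rw [Nat.card_Ico]; omega

theorem sum_range_sum_Ico_sub_le {a : ℕ → ℝ} (ha : ∀ k, 0 ≤ a k) (s N : ℕ) :
    ∑ t ∈ range N, ∑ k ∈ Ico (t - s) t, a k ≤ s * ∑ k ∈ range N, a k := by
  classical
  rw [sum_comm' (t' := range N) (s' := fun k => (range N).filter fun t => t - s ≤ k ∧ k < t)
    (by intro t k; simp only [mem_range, mem_Ico, mem_filter]; omega), mul_sum]
  gcongr with k
  -- each `k` is counted only by the times `t ∈ (k, k + s]`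
  have hcard : ((range N).filter fun t => t - s ≤ k ∧ k < t).card ≤ s :=
    (card_le_card fun t => by simp only [mem_filter, mem_Ioc]; omega).trans
      (Nat.card_Ioc k (k + s)).le |>.trans (by omega)
  rw [sum_const, nsmul_eq_mul]
  exact mul_le_mul_of_nonneg_right (by exact_mod_cast hcard) (ha k)

theorem summable_of_add_mul_le_add_mul_sum_Ico {φ a : ℕ → ℝ} {A B m : ℝ} {s : ℕ}
    (ha : ∀ t, 0 ≤ a t) (hB : 0 ≤ B) (hAB : B * s < A) (hm : ∀ t, m ≤ φ t)
    (h : ∀ t, φ (t + 1) + A * a t ≤ φ t + B * ∑ k ∈ Ico (t - s) t, a k) : Summable a := by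
  have htele : ∀ N, φ N + A * ∑ t ∈ range N, a t
      ≤ φ 0 + B * ∑ t ∈ range N, ∑ k ∈ Ico (t - s) t, a k := by
    intro N
    induction N with
    | zero => simp
    | succ N ih =>
      rw [sum_range_succ, sum_range_succ, mul_add, mul_add]
      linarith [h N]
  refine summable_of_sum_range_le (c := (φ 0 - m) / (A - B * s)) ha fun N =>
    (le_div_iff₀ (sub_pos.2 hAB)).2 ?_
  have hdouble := mul_le_mul_of_nonneg_left (sum_range_sum_Ico_sub_le ha s N) hB
  linarith [htele N, hm N]

section DelayedDescent

variable {ι : Type*} [Fintype ι] {β : ι → Type*} [∀ i, NormedAddCommGroup (β i)]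
  [∀ i, InnerProductSpace ℝ (β i)] [∀ i, CompleteSpace (β i)]
  {X : ℕ → PiLp 2 β} {Xl : ι → ℕ → PiLp 2 β} {f : PiLp 2 β → ℝ} {f' : PiLp 2 β → PiLp 2 β}
  {G : ι → ℕ → ℝ} {η L : ℝ} {s : ℕ}

theorem delayed_descent_step (hf : ∀ y, HasGradientAt f (f' y) y)
    (hlip : ∀ y z, ‖f' y - f' z‖ ≤ L * ‖y - z‖) (hL : 0 ≤ L) (t : ℕ)
    (hprox : ∀ i, G i (t + 1) + 1 / (2 * η) * ‖(X (t + 1) - X t) i‖ ^ 2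
      + ⟪(X (t + 1) - X t) i, f' (Xl i t) i⟫ ≤ G i t)
    (hdelay : ∀ i, ‖X t - Xl i t‖ ≤ ∑ k ∈ Ico (t - s) t, ‖X (k + 1) - X k‖) :
    f (X (t + 1)) + ∑ i, G i (t + 1)
        + (1 / (2 * η) - L / 2 - L * √(Fintype.card ι) * s / 2) * ‖X (t + 1) - X t‖ ^ 2
      ≤ f (X t) + ∑ i, G i t
        + L * √(Fintype.card ι) / 2 * ∑ k ∈ Ico (t - s) t, ‖X (k + 1) - X k‖ ^ 2 := by
  set Δ := X (t + 1) - X t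
  set D := ∑ k ∈ Ico (t - s) t, ‖X (k + 1) - X k‖
  have hdescent := image_le_add_inner_add_sq_of_lipschitz_gradient hf hlip (X t) (X (t + 1))
  have hprox_sum : ∑ i, G i (t + 1) + 1 / (2 * η) * ‖Δ‖ ^ 2 + ∑ i, ⟪Δ i, f' (Xl i t) i⟫
      ≤ ∑ i, G i t := by
    have := sum_le_sum fun i (_ : i ∈ univ) => hprox i
    rwa [sum_add_distrib, sum_add_distrib, ← mul_sum, ← PiLp.norm_sq_eq_of_L2] at this
  have hcross : ∑ i, ⟪(f' (X t) - f' (Xl i t)) i, Δ i⟫ ≤ L * D * √(Fintype.card ι) * ‖Δ‖ :=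
    PiLp.sum_inner_apply_le (by positivity) fun i =>
      (hlip _ _).trans (mul_le_mul_of_nonneg_left (hdelay i) hL)
  have hsplit : ⟪f' (X t), Δ⟫ = ∑ i, ⟪(f' (X t) - f' (Xl i t)) i, Δ i⟫
      + ∑ i, ⟪Δ i, f' (Xl i t) i⟫ := by
    rw [PiLp.inner_apply, ← sum_add_distrib]
    refine sum_congr rfl fun i _ => ?_
    rw [PiLp.sub_apply (x := f' (X t)), inner_sub_left, real_inner_comm (f' (Xl i t) i),
      sub_add_cancel]
  have hamgm := mul_le_mul_of_nonneg_left
    (sum_mul_le_half_sum_sq_add (card_Ico_sub_le t s) (fun k => ‖X (k + 1) - X k‖) ‖Δ‖)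
    (by positivity : 0 ≤ L * √(Fintype.card ι))
  linarith

theorem summable_sq_norm_sub_of_delayed_prox_descent (hf : ∀ y, HasGradientAt f (f' y) y)
    (hlip : ∀ y z, ‖f' y - f' z‖ ≤ L * ‖y - z‖) (hL : 0 < L) (hη : 0 < η)
    (hstep : η < 1 / (L * (1 + 2 * √(Fintype.card ι) * s)))
    (hbdd : ∃ m, ∀ t, m ≤ f (X t) + ∑ i, G i t)
    (hprox : ∀ i t, G i (t + 1) + 1 / (2 * η) * ‖(X (t + 1) - X t) i‖ ^ 2
      + ⟪(X (t + 1) - X t) i, f' (Xl i t) i⟫ ≤ G i t)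
    (hdelay : ∀ i t, ‖X t - Xl i t‖ ≤ ∑ k ∈ Ico (t - s) t, ‖X (k + 1) - X k‖) :
    Summable fun t => ‖X (t + 1) - X t‖ ^ 2 := by
  obtain ⟨m, hm⟩ := hbdd
  have hLη : L * (1 + 2 * √(Fintype.card ι) * s) < 1 / η :=
    (lt_one_div hη (by positivity)).1 hstep
  refine summable_of_add_mul_le_add_mul_sum_Ico (fun t => sq_nonneg _) (by positivity) ?_ hm
    fun t => delayed_descent_step hf hlip hL.le t (hprox · t) (hdelay · t)
  have : 1 / (2 * η) = 1 / η / 2 := by ring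
  linarith

end DelayedDescent

theorem stmt_2_general
    (p s : ℕ) (d : Fin p → ℕ)
    (τ : Fin p → Fin p → ℕ → ℕ)
    (hτ_le : ∀ i j t, τ i j t ≤ t)
    (hτ_ge : ∀ i j t, t ≤ τ i j t + s)
    (x : (i : Fin p) → ℕ → EuclideanSpace ℝ (Fin (d i)))
    (X : ℕ → EE p d) (hX : ∀ t i, X t i = x i t)
    (Xl : Fin p → ℕ → EE p d) (hXl : ∀ i t j, Xl i t j = x j (τ i j t))
    (T : Fin p → Set ℕ)
    (η L : ℝ) (hη : 0 < η) (hL : 0 < L)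
    (f : EE p d → ℝ) (f' : EE p d → EE p d)
    (hf : ∀ y, HasGradientAt f (f' y) y)
    (hlip : ∀ y z, ‖f' y - f' z‖ ≤ L * ‖y - z‖)
    (g : (i : Fin p) → EuclideanSpace ℝ (Fin (d i)) → EReal)
    (hg_nebot : ∀ i z, g i z ≠ ⊥)
    (F : EE p d → EReal)
    (hF : ∀ y, F y = (f y : EReal) + ∑ i, g i (y i))
    (hF_bdd : ∃ m : ℝ, ∀ y, (m : EReal) ≤ F y)
    (hF0 : F (X 0) < ⊤)
    (hskip : ∀ i t, t ∉ T i → x i (t + 1) = x i t)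
    (hupd : ∀ i t, t ∈ T i → ∀ z : EuclideanSpace ℝ (Fin (d i)),
      g i (x i (t + 1)) +
        ((1 / (2 * η) * ‖x i (t + 1) - (x i t - η • f' (Xl i t) i)‖ ^ 2 : ℝ) : EReal)
      ≤ g i z + ((1 / (2 * η) * ‖z - (x i t - η • f' (Xl i t) i)‖ ^ 2 : ℝ) : EReal))
    (hstep : η < 1 / (L * (1 + 2 * Real.sqrt p * s))) :
    Summable (fun t => ‖X (t + 1) - X t‖ ^ 2) := by
  have hmove : ∀ i t, x i (t + 1) = x i t ∨ proxObjective (g i) η (x i t) (f' (Xl i t) i)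
      (x i (t + 1)) ≤ proxObjective (g i) η (x i t) (f' (Xl i t) i) (x i t) := fun i t => by
    by_cases ht : t ∈ T i
    · exact Or.inr (hupd i t ht (x i t))
    · exact Or.inl (hskip i t ht)
  have hinit : ∀ i, g i (x i 0) ≠ ⊤ := fun i =>
    EReal.ne_top_of_sum_ne_top (a := fun j => g j (x j 0)) (fun j => hg_nebot j _)
      (fun htop => by simp [hF, hX, htop] at hF0) (mem_univ i)
  have hfinite := fun i => ne_top_of_stationary_or_proxObjective_le (hinit i) (hmove i)
  obtain ⟨m, hm⟩ := hF_bdd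
  refine summable_sq_norm_sub_of_delayed_prox_descent (G := fun i t => (g i (x i t)).toReal)
    hf hlip hL hη (by simpa using hstep) ⟨m, fun t => ?_⟩ (fun i t => ?_)
    fun i t => PiLp.norm_sub_le_sum_Ico_norm_sub X (hτ_le i · t) (hτ_ge i · t) fun j => by
      rw [hXl, hX]
  · have hsum : ∑ i, g i (X t i) = ((∑ i, (g i (x i t)).toReal : ℝ) : EReal) := by
      rw [EReal.coe_finset_sum]
      exact sum_congr rfl fun i _ => by rw [hX, EReal.coe_toReal (hfinite i t) (hg_nebot _ _)]
    simpa only [hF, hsum, ← EReal.coe_add, EReal.coe_le_coe_iff] using hm (X t)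
  · simpa only [PiLp.sub_apply, hX] using
      toReal_add_inner_le_of_stationary_or_proxObjective_le hη.ne' (hg_nebot i) (hinit i)
        (hmove i) t

theorem stmt_2
    (p s : ℕ) (hp : 1 ≤ p) (d : Fin p → ℕ) (hd : ∀ i, 1 ≤ d i)
    (τ : Fin p → Fin p → ℕ → ℕ)
    (hτ_le : ∀ i j t, τ i j t ≤ t)
    (hτ_ge : ∀ i j t, t ≤ τ i j t + s)
    (hτ_self : ∀ i t, τ i i t = t)
    (x : (i : Fin p) → ℕ → EuclideanSpace ℝ (Fin (d i)))
    (X : ℕ → EE p d) (hX : ∀ t i, X t i = x i t)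
    (Xl : Fin p → ℕ → EE p d) (hXl : ∀ i t j, Xl i t j = x j (τ i j t))
    (T : Fin p → Set ℕ)
    (hT : ∀ i t, ∃ k ∈ T i, t ≤ k ∧ k ≤ t + s)
    (η L : ℝ) (hη : 0 < η) (hL : 0 < L)
    (f : EE p d → ℝ) (f' : EE p d → EE p d)
    (hf : ∀ y, HasGradientAt f (f' y) y)
    (hlip : ∀ y z, ‖f' y - f' z‖ ≤ L * ‖y - z‖)
    (g : (i : Fin p) → EuclideanSpace ℝ (Fin (d i)) → EReal)
    (hg_nebot : ∀ i z, g i z ≠ ⊥)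
    (hg_proper : ∀ i, ∃ z, g i z ≠ ⊤)
    (hg_lsc : ∀ i, LowerSemicontinuous (g i))
    (F : EE p d → EReal)
    (hF : ∀ y, F y = (f y : EReal) + ∑ i, g i (y i))
    (hF_bdd : ∃ m : ℝ, ∀ y, (m : EReal) ≤ F y)
    (hF0 : F (X 0) < ⊤)
    (hskip : ∀ i t, t ∉ T i → x i (t + 1) = x i t)
    (hupd : ∀ i t, t ∈ T i → ∀ z : EuclideanSpace ℝ (Fin (d i)),
      g i (x i (t + 1)) +
        ((1 / (2 * η) * ‖x i (t + 1) - (x i t - η • f' (Xl i t) i)‖ ^ 2 : ℝ) : EReal)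
      ≤ g i z + ((1 / (2 * η) * ‖z - (x i t - η • f' (Xl i t) i)‖ ^ 2 : ℝ) : EReal))
    (hstep : η < 1 / (L * (1 + 2 * Real.sqrt p * s))) :
    Summable (fun t => ‖X (t + 1) - X t‖ ^ 2) :=
  stmt_2_general p s d τ hτ_le hτ_ge x X hX Xl hXl T η L hη hL f f' hf hlip g hg_nebot F hF hF_bdd
    hF0 hskip hupd hstep
end

section
/- If the step size satisfies 0 < η < 1/(L(1 + 2√p·s)), then for every i ∈ {1, …, p}, the set of cluster points (limits of convergent subsequences) of the global sequence {x(t)} equals the set of cluster points of the local sequence {x^i(t)}. -/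
open Filter Topology

/-!
Along m-PAPG the increments `a t = ‖x(t+1) - x(t)‖` are square-summable. A proximal block update
decreases `g_i` plus the linear term `⟪Δ_i, ∇_i f(x^i(t))⟫` by `‖Δ_i‖² / (2η)`; summed over the
blocks and combined with the descent lemma for `f`, this makes `V = f + g` decrease by
`(1/(2η) - L/2) a_t²` up to the error `⟪Δ, ∇f(x(t)) - w⟫`, where `w` collects the delayed partial
gradients. A local model differs from the global one by at most the last `s` increments, so the
error is at most `√p L a_t ∑_{t-s ≤ r < t} a_r`, and the step size condition makes the accumulated
errors smaller than the accumulated decrease. Hence `a t → 0`, so `x(t) - x^i(t) → 0` and the two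
sequences have the same subsequential limits.
-/

open scoped InnerProductSpace

section Descent

variable {E : Type*} [NormedAddCommGroup E] [InnerProductSpace ℝ E] [CompleteSpace E]

theorem le_add_inner_add_of_lipschitz_gradient {f : E → ℝ} {f' : E → E} {L : ℝ}
    (hf : ∀ y, HasGradientAt f (f' y) y) (hlip : ∀ y z, ‖f' y - f' z‖ ≤ L * ‖y - z‖) (a b : E) :
    f b ≤ f a + ⟪f' a, b - a⟫_ℝ + L / 2 * ‖b - a‖ ^ 2 := by
  set v := b - a
  set φ : ℝ → ℝ := fun u => f (a + u • v) - u * ⟪f' a, v⟫_ℝ - L / 2 * u ^ 2 * ‖v‖ ^ 2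
  have hφ : ∀ u, HasDerivAt φ (⟪f' (a + u • v), v⟫_ℝ - ⟪f' a, v⟫_ℝ - L * u * ‖v‖ ^ 2) u := by
    intro u
    have hline : HasDerivAt (fun u : ℝ => a + u • v) v u := by
      simpa using ((hasDerivAt_id u).smul_const v).const_add a
    have hf_line := (hf (a + u • v)).hasFDerivAt.comp_hasDerivAt u hline
    simp only [Function.comp_def, InnerProductSpace.toDual_apply_apply] at hf_line
    have hφ' := (hf_line.sub (hasDerivAt_mul_const ⟪f' a, v⟫_ℝ)).sub
      (((hasDerivAt_pow 2 u).const_mul (L / 2)).mul_const (‖v‖ ^ 2))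
    exact hφ'.congr_deriv (by push_cast; ring)
  have hφ_nonpos : ∀ u ∈ interior (Set.Ici (0 : ℝ)),
      ⟪f' (a + u • v), v⟫_ℝ - ⟪f' a, v⟫_ℝ - L * u * ‖v‖ ^ 2 ≤ 0 := by
    intro u hu
    rw [interior_Ici, Set.mem_Ioi] at hu
    rw [sub_nonpos]
    have hgrad : ‖f' (a + u • v) - f' a‖ ≤ L * (u * ‖v‖) := by
      simpa [norm_smul, abs_of_pos hu] using hlip (a + u • v) a
    calc ⟪f' (a + u • v), v⟫_ℝ - ⟪f' a, v⟫_ℝ = ⟪f' (a + u • v) - f' a, v⟫_ℝ :=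
          (inner_sub_left ..).symm
      _ ≤ ‖f' (a + u • v) - f' a‖ * ‖v‖ := real_inner_le_norm _ _
      _ ≤ L * (u * ‖v‖) * ‖v‖ := by gcongr
      _ = L * u * ‖v‖ ^ 2 := by ring
  have hanti : AntitoneOn φ (Set.Ici 0) :=
    antitoneOn_of_hasDerivWithinAt_nonpos (convex_Ici 0)
      (fun u _ => (hφ u).continuousAt.continuousWithinAt) (fun u _ => (hφ u).hasDerivWithinAt)
      hφ_nonpos
  have h01 := hanti Set.self_mem_Ici (Set.mem_Ici.2 zero_le_one) zero_le_one
  simp only [φ, v, one_smul, zero_smul, add_zero, add_sub_cancel] at h01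
  linarith

theorem le_add_mul_of_inexact_gradient_step {f : E → ℝ} {f' : E → E} {L c δ G G' : ℝ}
    (hf : ∀ y, HasGradientAt f (f' y) y) (hlip : ∀ y z, ‖f' y - f' z‖ ≤ L * ‖y - z‖)
    {x x' w : E} (hstep : G' + c * ‖x' - x‖ ^ 2 + ⟪x' - x, w⟫_ℝ ≤ G) (hw : ‖f' x - w‖ ≤ δ) :
    f x' + G' + (c - L / 2) * ‖x' - x‖ ^ 2 ≤ f x + G + ‖x' - x‖ * δ := by
  have hdesc := le_add_inner_add_of_lipschitz_gradient hf hlip x x'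
  have herr : ⟪f' x, x' - x⟫_ℝ - ⟪x' - x, w⟫_ℝ ≤ ‖x' - x‖ * δ := by
    rw [real_inner_comm, ← inner_sub_right]
    exact (real_inner_le_norm _ _).trans (by gcongr)
  linarith

end Descent

theorem add_inner_le_of_prox_le_s6 {E : Type*} [NormedAddCommGroup E] [InnerProductSpace ℝ E]
    {η G G' : ℝ} {x x' w : E} (hη : 0 < η)
    (h : G' + 1 / (2 * η) * ‖x' - (x - η • w)‖ ^ 2 ≤ G + 1 / (2 * η) * ‖x - (x - η • w)‖ ^ 2) :
    G' + 1 / (2 * η) * ‖x' - x‖ ^ 2 + ⟪x' - x, w⟫_ℝ ≤ G := by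
  have hexpand : ‖x' - (x - η • w)‖ ^ 2 = ‖x' - x‖ ^ 2 + 2 * η * ⟪x' - x, w⟫_ℝ + ‖η • w‖ ^ 2 := by
    rw [sub_sub_eq_add_sub, add_sub_right_comm, norm_add_sq_real, real_inner_smul_right]
    ring
  rw [hexpand, sub_sub_cancel] at h
  field_simp at h ⊢
  linarith

namespace EReal

theorem coe_finsetSum {ι : Type*} (S : Finset ι) (h : ι → ℝ) :
    ((∑ i ∈ S, h i : ℝ) : EReal) = ∑ i ∈ S, (h i : EReal) :=
  map_sum (⟨⟨(↑), coe_zero⟩, coe_add⟩ : ℝ →+ EReal) h S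

theorem ne_top_of_sum_ne_top_s6 {ι : Type*} {S : Finset ι} {h : ι → EReal} (hbot : ∀ i ∈ S, h i ≠ ⊥)
    (hsum : ∑ i ∈ S, h i ≠ ⊤) {j : ι} (hj : j ∈ S) : h j ≠ ⊤ := by
  classical
  intro htop
  have hrest : ∑ i ∈ S.erase j, h i ≠ ⊥ := fun H => by
    obtain ⟨i, hi, hi_bot⟩ := (WithBot.sum_eq_bot_iff (M := WithTop ℝ)).1 H
    exact hbot i (Finset.mem_of_mem_erase hi) hi_bot
  rw [← Finset.add_sum_erase S h hj, htop, top_add_of_ne_bot hrest] at hsum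
  exact hsum rfl

theorem ne_top_and_toReal_add_le {a b : EReal} {r r' : ℝ} (ha : a ≠ ⊥) (hb : b ≠ ⊤) (hb' : b ≠ ⊥)
    (h : a + r ≤ b + r') : a ≠ ⊤ ∧ a.toReal + r ≤ b.toReal + r' := by
  lift b to ℝ using ⟨hb, hb'⟩
  have ha' : a ≠ ⊤ := by
    rintro rfl
    rw [top_add_coe, top_le_iff, ← coe_add] at h
    exact coe_ne_top _ h
  lift a to ℝ using ⟨ha', ha⟩
  exact ⟨ha', by exact_mod_cast h⟩

end EReal

namespace PiLp

variable {ι : Type*} [Fintype ι] {β : ι → Type*} [∀ j, SeminormedAddCommGroup (β j)]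

theorem norm_le_norm_of_forall_norm_apply_le_s6 {x y : PiLp 2 β} (h : ∀ j, ‖x j‖ ≤ ‖y j‖) :
    ‖x‖ ≤ ‖y‖ := by
  rw [norm_eq_of_L2, norm_eq_of_L2]
  gcongr with j
  exact h j

theorem norm_le_sqrt_card_mul {x : PiLp 2 β} {c : ℝ} (hc : 0 ≤ c) (h : ∀ j, ‖x j‖ ≤ c) :
    ‖x‖ ≤ √(Fintype.card ι) * c := by
  calc ‖x‖ = √(∑ j, ‖x j‖ ^ 2) := norm_eq_of_L2 x
    _ ≤ √(∑ _j : ι, c ^ 2) := by gcongr with j; exact h j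
    _ = √(Fintype.card ι) * c := by
      rw [Finset.sum_const, Finset.card_univ, nsmul_eq_mul, Real.sqrt_mul (Nat.cast_nonneg _),
        Real.sqrt_sq hc]

theorem norm_sub_le_sum_Ico (Y : ℕ → PiLp 2 β) (Z : PiLp 2 β) (τ : ι → ℕ) {s t : ℕ}
    (hle : ∀ j, τ j ≤ t) (hge : ∀ j, t ≤ τ j + s) (hZ : ∀ j, Z j = Y (τ j) j) :
    ‖Y t - Z‖ ≤ ∑ r ∈ Finset.Ico (t - s) t, ‖Y (r + 1) - Y r‖ := by
  classical
  let D : ℕ → PiLp 2 β := fun r =>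
    WithLp.toLp 2 fun j => if τ j ≤ r then Y (r + 1) j - Y r j else 0
  have hsum : Y t - Z = ∑ r ∈ Finset.Ico (t - s) t, D r := by
    ext j
    have hwindow : Finset.Ico (τ j) t ⊆ Finset.Ico (t - s) t :=
      Finset.Ico_subset_Ico (by have := hge j; omega) le_rfl
    rw [sub_apply, hZ, WithLp.ofLp_sum, Finset.sum_apply, ← Finset.sum_subset hwindow]
    · rw [Finset.sum_congr rfl (g := fun r => Y (r + 1) j - Y r j) fun r hr => by
          simp [D, (Finset.mem_Ico.1 hr).1],
        Finset.sum_Ico_sub (fun r => Y r j) (hle j)]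
    · intro r _ hr
      simp [D, show ¬τ j ≤ r by simp_all]
  have hD : ∀ r, ‖D r‖ ≤ ‖Y (r + 1) - Y r‖ := fun r =>
    norm_le_norm_of_forall_norm_apply_le_s6 fun j => by
      by_cases hr : τ j ≤ r <;> simp [D, hr]
  calc ‖Y t - Z‖ = ‖∑ r ∈ Finset.Ico (t - s) t, D r‖ := by rw [hsum]
    _ ≤ ∑ r ∈ Finset.Ico (t - s) t, ‖D r‖ := norm_sum_le _ _
    _ ≤ _ := Finset.sum_le_sum fun r _ => hD r

end PiLp

theorem mul_sum_le_card_mul_sq_add_sum_sq {ι : Type*} (S : Finset ι) (a : ℝ) (b : ι → ℝ) :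
    a * ∑ r ∈ S, b r ≤ (S.card * a ^ 2 + ∑ r ∈ S, b r ^ 2) / 2 := by
  have hterm : ∀ r ∈ S, a * b r ≤ (a ^ 2 + b r ^ 2) / 2 := fun r _ => by
    linarith [two_mul_le_add_sq a (b r)]
  calc a * ∑ r ∈ S, b r = ∑ r ∈ S, a * b r := Finset.mul_sum ..
    _ ≤ ∑ r ∈ S, (a ^ 2 + b r ^ 2) / 2 := Finset.sum_le_sum hterm
    _ = _ := by rw [← Finset.sum_div, Finset.sum_add_distrib, Finset.sum_const, nsmul_eq_mul]

theorem sum_range_sum_Ico_le {c : ℕ → ℝ} (hc : ∀ r, 0 ≤ c r) (s N : ℕ) :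
    ∑ t ∈ Finset.range N, ∑ r ∈ Finset.Ico (t - s) t, c r ≤ s * ∑ r ∈ Finset.range N, c r := by
  rw [Finset.sum_comm' (t' := Finset.range N)
    (s' := fun r => (Finset.range N).filter fun t => r ∈ Finset.Ico (t - s) t)
    (fun t r => by simp only [Finset.mem_range, Finset.mem_Ico, Finset.mem_filter]; omega),
    Finset.mul_sum]
  refine Finset.sum_le_sum fun r _ => ?_
  -- `r` lies in the window `[t - s, t)` only for `r < t ≤ r + s`
  have hcard : ((Finset.range N).filter fun t => r ∈ Finset.Ico (t - s) t).card ≤ s := by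
    calc _ ≤ (Finset.Ioc r (r + s)).card := Finset.card_le_card fun t ht => by
          simp only [Finset.mem_filter, Finset.mem_Ico, Finset.mem_Ioc] at ht ⊢; omega
      _ = s := by simp
  rw [Finset.sum_const, nsmul_eq_mul]
  exact mul_le_mul_of_nonneg_right (by exact_mod_cast hcard) (hc r)

theorem tendsto_sum_Ico_sub_of_tendsto_zero {M : Type*} [AddCommMonoid M] [TopologicalSpace M]
    [ContinuousAdd M] {a : ℕ → M} (ha : Tendsto a atTop (𝓝 0)) (s : ℕ) :
    Tendsto (fun t => ∑ r ∈ Finset.Ico (t - s) t, a r) atTop (𝓝 0) := by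
  have hshift : Tendsto (fun t => ∑ k ∈ Finset.range s, a (t - s + k)) atTop (𝓝 0) := by
    simpa using tendsto_finsetSum (Finset.range s)
      fun k _ => ha.comp ((tendsto_add_atTop_nat k).comp (tendsto_sub_atTop_nat s))
  refine hshift.congr' ?_
  filter_upwards [eventually_ge_atTop s] with t ht
  rw [Finset.sum_Ico_eq_sum_range, Nat.sub_sub_self ht]

theorem tendsto_zero_of_delayed_descent {V a : ℕ → ℝ} {α K m : ℝ} (s : ℕ) (ha : ∀ t, 0 ≤ a t)
    (hK : 0 ≤ K) (hKα : K * s < α) (hm : ∀ t, m ≤ V t)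
    (hV : ∀ t, V (t + 1) + α * a t ^ 2 ≤ V t + K * a t * ∑ r ∈ Finset.Ico (t - s) t, a r) :
    Tendsto a atTop (𝓝 0) := by
  have hstep : ∀ t, V (t + 1) + α * a t ^ 2
      ≤ V t + K / 2 * (s * a t ^ 2 + ∑ r ∈ Finset.Ico (t - s) t, a r ^ 2) := fun t => by
    have hamgm := mul_sum_le_card_mul_sq_add_sum_sq (Finset.Ico (t - s) t) (a t) a
    have hcard : ((Finset.Ico (t - s) t).card : ℝ) ≤ s := by
      rw [Nat.card_Ico]; exact_mod_cast (by omega : t - (t - s) ≤ s)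
    have hcard' := mul_le_mul_of_nonneg_left (mul_le_mul_of_nonneg_right hcard (sq_nonneg (a t))) hK
    linarith [hV t, mul_le_mul_of_nonneg_left hamgm hK]
  have htel : ∀ N, V N + α * ∑ t ∈ Finset.range N, a t ^ 2 ≤ V 0 + K / 2 *
      (s * ∑ t ∈ Finset.range N, a t ^ 2 +
        ∑ t ∈ Finset.range N, ∑ r ∈ Finset.Ico (t - s) t, a r ^ 2) := by
    intro N
    induction N with
    | zero => simp
    | succ N ih =>
      simp only [Finset.sum_range_succ]
      linarith [hstep N]
  have hbound : ∀ N, ∑ t ∈ Finset.range N, a t ^ 2 ≤ (V 0 - m) / (α - K * s) := fun N => by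
    rw [le_div_iff₀ (by linarith)]
    have := sum_range_sum_Ico_le (fun r => sq_nonneg (a r)) s N
    nlinarith [htel N, hm N, mul_le_mul_of_nonneg_left this hK]
  have hsq := (summable_of_sum_range_le (fun t => sq_nonneg (a t)) hbound).tendsto_atTop_zero
  simpa [Real.sqrt_sq (ha _)] using hsq.sqrt

theorem setOf_tendsto_subseq_eq_of_tendsto_sub {G : Type*} [TopologicalSpace G] [AddCommGroup G]
    [IsTopologicalAddGroup G] {u v : ℕ → G} (h : Tendsto (fun t => u t - v t) atTop (𝓝 0)) :
    {z | ∃ φ : ℕ → ℕ, StrictMono φ ∧ Tendsto (fun m => u (φ m)) atTop (𝓝 z)} =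
      {z | ∃ φ : ℕ → ℕ, StrictMono φ ∧ Tendsto (fun m => v (φ m)) atTop (𝓝 z)} := by
  have key : ∀ u v : ℕ → G, Tendsto (fun t => u t - v t) atTop (𝓝 0) →
      {z | ∃ φ : ℕ → ℕ, StrictMono φ ∧ Tendsto (fun m => u (φ m)) atTop (𝓝 z)} ⊆
      {z | ∃ φ : ℕ → ℕ, StrictMono φ ∧ Tendsto (fun m => v (φ m)) atTop (𝓝 z)} := by
    rintro u v h z ⟨φ, hφ, hz⟩
    exact ⟨φ, hφ, by simpa using hz.sub (h.comp hφ.tendsto_atTop)⟩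
  exact (key u v h).antisymm (key v u (by simpa using h.neg))

section ProxStep

variable {E : Type*} [NormedAddCommGroup E] [InnerProductSpace ℝ E]

theorem ne_top_of_prox_steps {g : E → EReal} {y w : ℕ → E} {T : Set ℕ} {η : ℝ}
    (hbot : ∀ z, g z ≠ ⊥) (h0 : g (y 0) ≠ ⊤) (hskip : ∀ t, t ∉ T → y (t + 1) = y t)
    (hupd : ∀ t, t ∈ T → ∀ z, g (y (t + 1)) +
        ((1 / (2 * η) * ‖y (t + 1) - (y t - η • w t)‖ ^ 2 : ℝ) : EReal)
      ≤ g z + ((1 / (2 * η) * ‖z - (y t - η • w t)‖ ^ 2 : ℝ) : EReal)) (t : ℕ) :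
    g (y t) ≠ ⊤ := by
  induction t with
  | zero => exact h0
  | succ t ih =>
    by_cases ht : t ∈ T
    · exact (EReal.ne_top_and_toReal_add_le (hbot _) ih (hbot _) (hupd t ht (y t))).1
    · rwa [hskip t ht]

theorem toReal_add_inner_le_of_prox_steps {g : E → EReal} {y w : ℕ → E} {T : Set ℕ} {η : ℝ}
    (hη : 0 < η) (hbot : ∀ z, g z ≠ ⊥) (h0 : g (y 0) ≠ ⊤)
    (hskip : ∀ t, t ∉ T → y (t + 1) = y t)
    (hupd : ∀ t, t ∈ T → ∀ z, g (y (t + 1)) +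
        ((1 / (2 * η) * ‖y (t + 1) - (y t - η • w t)‖ ^ 2 : ℝ) : EReal)
      ≤ g z + ((1 / (2 * η) * ‖z - (y t - η • w t)‖ ^ 2 : ℝ) : EReal)) (t : ℕ) :
    (g (y (t + 1))).toReal + 1 / (2 * η) * ‖y (t + 1) - y t‖ ^ 2 + ⟪y (t + 1) - y t, w t⟫_ℝ
      ≤ (g (y t)).toReal := by
  by_cases ht : t ∈ T
  · refine add_inner_le_of_prox_le_s6 hη (EReal.ne_top_and_toReal_add_le (hbot _)
      (ne_top_of_prox_steps hbot h0 hskip hupd t) (hbot _) (hupd t ht (y t))).2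
  · simp [hskip t ht]

end ProxStep

theorem delayed_block_step_descent {ι : Type*} [Fintype ι] {β : ι → Type*}
    [∀ j, NormedAddCommGroup (β j)] [∀ j, InnerProductSpace ℝ (β j)] [∀ j, CompleteSpace (β j)]
    {f : PiLp 2 β → ℝ} {f' : PiLp 2 β → PiLp 2 β} {L c b : ℝ} (hL : 0 ≤ L) (hb : 0 ≤ b)
    (hf : ∀ y, HasGradientAt f (f' y) y) (hlip : ∀ y z, ‖f' y - f' z‖ ≤ L * ‖y - z‖)
    {x x' : PiLp 2 β} {xl : ι → PiLp 2 β} {G G' : ι → ℝ}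
    (hblock : ∀ j, G' j + c * ‖x' j - x j‖ ^ 2 + ⟪x' j - x j, f' (xl j) j⟫_ℝ ≤ G j)
    (hdelay : ∀ j, ‖x - xl j‖ ≤ b) :
    f x' + ∑ j, G' j + (c - L / 2) * ‖x' - x‖ ^ 2
      ≤ f x + ∑ j, G j + √(Fintype.card ι) * L * ‖x' - x‖ * b := by
  let w : PiLp 2 β := WithLp.toLp 2 fun j => f' (xl j) j
  have hsum : ∑ j, G' j + c * ‖x' - x‖ ^ 2 + ⟪x' - x, w⟫_ℝ ≤ ∑ j, G j := by
    rw [PiLp.norm_sq_eq_of_L2, PiLp.inner_apply, Finset.mul_sum, ← Finset.sum_add_distrib,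
      ← Finset.sum_add_distrib]
    exact Finset.sum_le_sum fun j _ => by simpa [w] using hblock j
  have herr : ‖f' x - w‖ ≤ √(Fintype.card ι) * (L * b) :=
    PiLp.norm_le_sqrt_card_mul (by positivity) fun j =>
      calc ‖(f' x - w) j‖ = ‖(f' x - f' (xl j)) j‖ := by simp [w]
        _ ≤ ‖f' x - f' (xl j)‖ := PiLp.norm_apply_le _ j
        _ ≤ L * ‖x - xl j‖ := hlip _ _
        _ ≤ L * b := by gcongr; exact hdelay j
  have := le_add_mul_of_inexact_gradient_step hf hlip hsum herr
  linarith [show ‖x' - x‖ * (√(Fintype.card ι) * (L * b))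
    = √(Fintype.card ι) * L * ‖x' - x‖ * b by ring]

theorem stmt_6_general
    (p s : ℕ) (d : Fin p → ℕ)
    (τ : Fin p → Fin p → ℕ → ℕ)
    (hτ_le : ∀ i j t, τ i j t ≤ t)
    (hτ_ge : ∀ i j t, t ≤ τ i j t + s)
    (x : (i : Fin p) → ℕ → EuclideanSpace ℝ (Fin (d i)))
    (X : ℕ → EE p d) (hX : ∀ t i, X t i = x i t)
    (Xl : Fin p → ℕ → EE p d) (hXl : ∀ i t j, Xl i t j = x j (τ i j t))
    (T : Fin p → Set ℕ)
    (η L : ℝ) (hη : 0 < η) (hL : 0 < L)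
    (f : EE p d → ℝ) (f' : EE p d → EE p d)
    (hf : ∀ y, HasGradientAt f (f' y) y)
    (hlip : ∀ y z, ‖f' y - f' z‖ ≤ L * ‖y - z‖)
    (g : (i : Fin p) → EuclideanSpace ℝ (Fin (d i)) → EReal)
    (hg_nebot : ∀ i z, g i z ≠ ⊥)
    (F : EE p d → EReal)
    (hF : ∀ y, F y = (f y : EReal) + ∑ i, g i (y i))
    (hF_bdd : ∃ m : ℝ, ∀ y, (m : EReal) ≤ F y)
    (hF0 : F (X 0) < ⊤)
    (hskip : ∀ i t, t ∉ T i → x i (t + 1) = x i t)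
    (hupd : ∀ i t, t ∈ T i → ∀ z : EuclideanSpace ℝ (Fin (d i)),
      g i (x i (t + 1)) +
        ((1 / (2 * η) * ‖x i (t + 1) - (x i t - η • f' (Xl i t) i)‖ ^ 2 : ℝ) : EReal)
      ≤ g i z + ((1 / (2 * η) * ‖z - (x i t - η • f' (Xl i t) i)‖ ^ 2 : ℝ) : EReal))
    (hstep : η < 1 / (L * (1 + 2 * Real.sqrt p * s))) :
    ∀ i : Fin p,
      {xstar : EE p d | ∃ φ : ℕ → ℕ, StrictMono φ ∧
          Tendsto (fun m => X (φ m)) atTop (𝓝 xstar)} =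
      {xstar : EE p d | ∃ φ : ℕ → ℕ, StrictMono φ ∧
          Tendsto (fun m => Xl i (φ m)) atTop (𝓝 xstar)} := by
  intro i
  obtain ⟨m, hm⟩ := hF_bdd
  have hg0 : ∀ j, g j (x j 0) ≠ ⊤ := by
    have hsum : ∑ j, g j (x j 0) ≠ ⊤ := fun htop => by
      simp only [hF, hX, htop, EReal.coe_add_top, lt_self_iff_false] at hF0
    exact fun j => EReal.ne_top_of_sum_ne_top_s6 (fun j _ => hg_nebot j _) hsum (Finset.mem_univ j)
  set a : ℕ → ℝ := fun t => ‖X (t + 1) - X t‖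
  set V : ℕ → ℝ := fun t => f (X t) + ∑ j, (g j (x j t)).toReal
  have hdelay : ∀ j t, ‖X t - Xl j t‖ ≤ ∑ r ∈ Finset.Ico (t - s) t, a r := fun j t =>
    PiLp.norm_sub_le_sum_Ico X (Xl j t) (fun k => τ j k t) (fun k => hτ_le j k t)
      (fun k => hτ_ge j k t) fun k => by rw [hXl, hX]
  have hV : ∀ t, V (t + 1) + (1 / (2 * η) - L / 2) * a t ^ 2
      ≤ V t + √p * L * a t * ∑ r ∈ Finset.Ico (t - s) t, a r := fun t => by
    have := delayed_block_step_descent hL.le (Finset.sum_nonneg fun r _ => norm_nonneg _) hf hlip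
      (x := X t) (x' := X (t + 1)) (xl := fun j => Xl j t) (fun j => by
        simpa only [hX] using toReal_add_inner_le_of_prox_steps hη (hg_nebot j) (hg0 j)
          (hskip j) (hupd j) t) (fun j => hdelay j t)
    simp only [Fintype.card_fin] at this
    linarith
  have hVm : ∀ t, m ≤ V t := fun t => by
    have hFV : F (X t) = (V t : EReal) := by
      rw [hF, EReal.coe_add, EReal.coe_finsetSum]
      simp only [hX, EReal.coe_toReal (ne_top_of_prox_steps (hg_nebot _) (hg0 _) (hskip _)
        (hupd _) t) (hg_nebot _ _)]
    exact_mod_cast hFV ▸ hm (X t)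
  have hα : √p * L * s < 1 / (2 * η) - L / 2 := by
    rw [lt_div_iff₀ (by positivity)] at hstep
    rw [lt_sub_iff_add_lt, lt_div_iff₀ (by positivity)]
    nlinarith
  have ha := tendsto_zero_of_delayed_descent s (fun t => norm_nonneg _) (by positivity) hα hVm hV
  exact setOf_tendsto_subseq_eq_of_tendsto_sub (tendsto_zero_iff_norm_tendsto_zero.2
    (squeeze_zero (fun t => norm_nonneg _) (hdelay i) (tendsto_sum_Ico_sub_of_tendsto_zero ha s)))

theorem stmt_6
    (p s : ℕ) (hp : 1 ≤ p) (d : Fin p → ℕ) (hd : ∀ i, 1 ≤ d i)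
    (τ : Fin p → Fin p → ℕ → ℕ)
    (hτ_le : ∀ i j t, τ i j t ≤ t)
    (hτ_ge : ∀ i j t, t ≤ τ i j t + s)
    (hτ_self : ∀ i t, τ i i t = t)
    (x : (i : Fin p) → ℕ → EuclideanSpace ℝ (Fin (d i)))
    (X : ℕ → EE p d) (hX : ∀ t i, X t i = x i t)
    (Xl : Fin p → ℕ → EE p d) (hXl : ∀ i t j, Xl i t j = x j (τ i j t))
    (T : Fin p → Set ℕ)
    (hT : ∀ i t, ∃ k ∈ T i, t ≤ k ∧ k ≤ t + s)
    (η L : ℝ) (hη : 0 < η) (hL : 0 < L)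
    (f : EE p d → ℝ) (f' : EE p d → EE p d)
    (hf : ∀ y, HasGradientAt f (f' y) y)
    (hlip : ∀ y z, ‖f' y - f' z‖ ≤ L * ‖y - z‖)
    (g : (i : Fin p) → EuclideanSpace ℝ (Fin (d i)) → EReal)
    (hg_nebot : ∀ i z, g i z ≠ ⊥)
    (hg_proper : ∀ i, ∃ z, g i z ≠ ⊤)
    (hg_lsc : ∀ i, LowerSemicontinuous (g i))
    (F : EE p d → EReal)
    (hF : ∀ y, F y = (f y : EReal) + ∑ i, g i (y i))
    (hF_bdd : ∃ m : ℝ, ∀ y, (m : EReal) ≤ F y)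
    (hF0 : F (X 0) < ⊤)
    (hskip : ∀ i t, t ∉ T i → x i (t + 1) = x i t)
    (hupd : ∀ i t, t ∈ T i → ∀ z : EuclideanSpace ℝ (Fin (d i)),
      g i (x i (t + 1)) +
        ((1 / (2 * η) * ‖x i (t + 1) - (x i t - η • f' (Xl i t) i)‖ ^ 2 : ℝ) : EReal)
      ≤ g i z + ((1 / (2 * η) * ‖z - (x i t - η • f' (Xl i t) i)‖ ^ 2 : ℝ) : EReal))
    (hstep : η < 1 / (L * (1 + 2 * Real.sqrt p * s))) :
    ∀ i : Fin p,
      {xstar : EE p d | ∃ φ : ℕ → ℕ, StrictMono φ ∧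
          Tendsto (fun m => X (φ m)) atTop (𝓝 xstar)} =
      {xstar : EE p d | ∃ φ : ℕ → ℕ, StrictMono φ ∧
          Tendsto (fun m => Xl i (φ m)) atTop (𝓝 xstar)} :=
  stmt_6_general p s d τ hτ_le hτ_ge x X hX Xl hXl T η L hη hL f f' hf hlip g hg_nebot F hF hF_bdd
    hF0 hskip hupd hstep
end

section
/- Suppose the step size satisfies 0 < η < 1/(L(1 + 2√p·s)), that the global sequence {x(t)} is bounded, and that the sufficient decrease property holds: there exist α > 0 and T₀ ∈ ℕ such that for all t ≥ T₀, F(x(t+1)) ≤ F(x(t)) − α·‖x(t+1) − x(t)‖². Then the limit F* = lim_{t→∞} F(x(t)) exists and is finite, and every cluster point x* of {x(t)} satisfies F(x*) = F*. -/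
open Filter Topology

/-!
Along the iterates `F` stays finite, since a proximal step can raise `gᵢ` only by a finite
amount. Sufficient decrease then makes `F (x t)` eventually nonincreasing and bounded below, so it
converges to some `F*`, and it forces `‖x (t + 1) - x t‖ → 0`. Hence if `x (φ m) → x*`, then
`x (b m) → x*` for every `b m` within bounded distance of `φ m`: the delayed reads and the iterates
in the window `[φ m, φ m + s + 1]` all converge to `x*`. Lower semicontinuity gives
`F x* ≤ F*`. Conversely, let `k` be the last update of block `i` in `[φ m, φ m + s]`, so that
`xᵢ (φ m + s + 1) = xᵢ (k + 1)`. Comparing the proximal objective at `xᵢ (k + 1)` with its value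
at `x*ᵢ`, the two quadratic terms have the same limit, so `limsup gᵢ (xᵢ (φ m + s + 1)) ≤ gᵢ x*ᵢ`;
with continuity of `f` this gives `F* ≤ F x*`.
-/

namespace EReal

variable {ι : Type*}

lemma finset_sum_ne_bot {s : Finset ι} {f : ι → EReal} (h : ∀ i ∈ s, f i ≠ ⊥) :
    ∑ i ∈ s, f i ≠ ⊥ := by
  classical
  induction s using Finset.induction_on with
  | empty => simp
  | insert a s ha ih =>
    rw [Finset.sum_insert ha, add_ne_bot_iff]
    exact ⟨h a (s.mem_insert_self a), ih fun i hi => h i (Finset.mem_insert_of_mem hi)⟩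

lemma finset_sum_ne_top_iff {s : Finset ι} {f : ι → EReal} (h : ∀ i ∈ s, f i ≠ ⊥) :
    ∑ i ∈ s, f i ≠ ⊤ ↔ ∀ i ∈ s, f i ≠ ⊤ := by
  classical
  induction s using Finset.induction_on with
  | empty => simp
  | insert a s ha ih =>
    have hs : ∀ i ∈ s, f i ≠ ⊥ := fun i hi => h i (Finset.mem_insert_of_mem hi)
    rw [Finset.sum_insert ha, add_ne_top_iff_ne_top₂ (h a (s.mem_insert_self a))
      (finset_sum_ne_bot hs), ih hs, Finset.forall_mem_insert]

lemma coe_add_sum_ne_top_iff [Fintype ι] {r : ℝ} {f : ι → EReal} (h : ∀ i, f i ≠ ⊥) :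
    (r : EReal) + ∑ i, f i ≠ ⊤ ↔ ∀ i, f i ≠ ⊤ := by
  rw [add_ne_top_iff_ne_top₂ (coe_ne_bot r) (finset_sum_ne_bot fun i _ => h i),
    finset_sum_ne_top_iff fun i _ => h i]
  simp

lemma coe_finset_sum_s13 (s : Finset ι) (r : ι → ℝ) :
    ((∑ i ∈ s, r i : ℝ) : EReal) = ∑ i ∈ s, (r i : EReal) :=
  map_sum (⟨⟨Real.toEReal, coe_zero⟩, coe_add⟩ : ℝ →+ EReal) r s

lemma le_add_coe_sub_of_add_coe_le {a b : EReal} {q q' : ℝ} (h : a + q ≤ b + q') :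
    a ≤ b + (q' - q : ℝ) :=
  calc a = a + q + (-q : ℝ) := by
        rw [add_assoc, ← coe_add, add_neg_cancel, coe_zero, add_zero]
    _ ≤ b + q' + (-q : ℝ) := add_le_add_left h _
    _ = b + (q' - q : ℝ) := by rw [add_assoc, ← coe_add, sub_eq_add_neg]

lemma le_coe_add_of_tendsto {α : Type*} {l : Filter α} [l.NeBot] {u : α → EReal}
    {r : α → ℝ} {a c : EReal} {r₀ : ℝ} (hu : Tendsto u l (𝓝 a)) (hr : Tendsto r l (𝓝 r₀))
    (h : ∀ m, u m ≤ r m + c) : a ≤ r₀ + c :=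
  have hrc : Tendsto (fun m => (r m : EReal) + c) l (𝓝 (r₀ + c)) :=
    (continuousAt_add (Or.inl (coe_ne_top r₀)) (Or.inl (coe_ne_bot r₀))).tendsto.comp
      (((continuous_coe_real_ereal.tendsto r₀).comp hr).prodMk_nhds tendsto_const_nhds)
  le_of_tendsto_of_tendsto' hu hrc h

lemma le_coe_add_sum_of_le_add_tendsto_zero [Fintype ι] {α : Type*} {l : Filter α}
    [l.NeBot] {r : α → ℝ} {r₀ : ℝ} {h : ι → α → EReal} {b : ι → EReal} {a : EReal}
    (hr : Tendsto r l (𝓝 r₀)) (ha : Tendsto (fun m => (r m : EReal) + ∑ i, h i m) l (𝓝 a))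
    (hle : ∀ i, ∃ D : α → ℝ, Tendsto D l (𝓝 0) ∧ ∀ m, h i m ≤ b i + (D m : EReal)) :
    a ≤ r₀ + ∑ i, b i := by
  choose D hD hhD using hle
  have hbound (m : α) :
      (r m : EReal) + ∑ i, h i m ≤ ((r m + ∑ i, D i m : ℝ) : EReal) + ∑ i, b i :=
    calc
      (r m : EReal) + ∑ i, h i m ≤ r m + ∑ i, (b i + (D i m : EReal)) :=
        add_le_add_right (Finset.sum_le_sum fun i _ => hhD i m) _
      _ = ((r m + ∑ i, D i m : ℝ) : EReal) + ∑ i, b i := by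
        rw [Finset.sum_add_distrib, coe_add, coe_finset_sum_s13]
        abel
  simpa using le_coe_add_of_tendsto ha (hr.add (tendsto_finsetSum _ fun i _ => hD i)) hbound

end EReal

lemma LowerSemicontinuous.ereal_finset_sum {α ι : Type*} [TopologicalSpace α] {s : Finset ι}
    {g : ι → α → EReal} (hg : ∀ i ∈ s, LowerSemicontinuous (g i))
    (hbot : ∀ i ∈ s, ∀ y, g i y ≠ ⊥) : LowerSemicontinuous fun y => ∑ i ∈ s, g i y := by
  classical
  induction s using Finset.induction_on with
  | empty => simpa using lowerSemicontinuous_const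
  | insert a s ha ih =>
    have hs : ∀ i ∈ s, ∀ y, g i y ≠ ⊥ := fun i hi => hbot i (Finset.mem_insert_of_mem hi)
    simp only [Finset.sum_insert ha]
    exact (hg a (s.mem_insert_self a)).add'
      (ih (fun i hi => hg i (Finset.mem_insert_of_mem hi)) hs) fun y =>
        EReal.continuousAt_add (Or.inr (EReal.finset_sum_ne_bot fun i hi => hs i hi y))
          (Or.inl (hbot a (s.mem_insert_self a) y))

lemma LowerSemicontinuous.le_of_tendsto {α β γ : Type*} [TopologicalSpace α] [LinearOrder γ]
    [TopologicalSpace γ] [OrderTopology γ] [DenselyOrdered γ] {f : α → γ}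
    (hf : LowerSemicontinuous f) {l : Filter β} [l.NeBot] {u : β → α} {a : α} {c : γ}
    (hu : Tendsto u l (𝓝 a)) (hfu : Tendsto (fun m => f (u m)) l (𝓝 c)) : f a ≤ c :=
  le_of_forall_lt_imp_le_of_dense fun _ hb =>
    ge_of_tendsto hfu ((hu.eventually (hf a _ hb)).mono fun _ h => h.le)


section Sequences

variable {E : Type*} [PseudoMetricSpace E] {u : ℕ → E}

lemma exists_tendsto_of_sufficient_decrease {v : ℕ → ℝ} {α m : ℝ} {T₀ : ℕ} (hα : 0 < α)
    (hm : ∀ t, m ≤ v t)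
    (hdec : ∀ t, T₀ ≤ t → v (t + 1) + α * dist (u (t + 1)) (u t) ^ 2 ≤ v t) :
    ∃ l, Tendsto v atTop (𝓝 l) ∧ Tendsto (fun t => dist (u (t + 1)) (u t)) atTop (𝓝 0) := by
  have hanti : Antitone fun n => v (n + T₀) := antitone_nat_of_succ_le fun n => by
    have := hdec (n + T₀) (Nat.le_add_left _ _)
    rw [add_right_comm]
    nlinarith [sq_nonneg (dist (u (n + T₀ + 1)) (u (n + T₀)))]
  have hv : Tendsto v atTop (𝓝 (⨅ n, v (n + T₀))) :=
    (tendsto_add_atTop_iff_nat T₀).1 <| tendsto_atTop_ciInf hanti ⟨m, by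
      rintro _ ⟨n, rfl⟩
      exact hm _⟩
  refine ⟨_, hv, ?_⟩
  have hgap : Tendsto (fun t => √((v t - v (t + 1)) / α)) atTop (𝓝 0) := by
    simpa using ((hv.sub (hv.comp (tendsto_add_atTop_nat 1))).div_const α).sqrt
  refine squeeze_zero' (Eventually.of_forall fun _ => dist_nonneg) ?_ hgap
  filter_upwards [eventually_ge_atTop T₀] with t ht
  refine Real.le_sqrt_of_sq_le ((le_div_iff₀ hα).2 ?_)
  linarith [hdec t ht]

lemma EReal.exists_tendsto_of_sufficient_decrease {v : ℕ → EReal} {α m : ℝ} {T₀ : ℕ}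
    (hα : 0 < α) (hm : ∀ t, (m : EReal) ≤ v t) (htop : ∀ t, v t ≠ ⊤)
    (hdec : ∀ t, T₀ ≤ t → v (t + 1) + ((α * dist (u (t + 1)) (u t) ^ 2 : ℝ) : EReal) ≤ v t) :
    ∃ l : ℝ, Tendsto v atTop (𝓝 (l : EReal)) ∧
      Tendsto (fun t => dist (u (t + 1)) (u t)) atTop (𝓝 0) := by
  have hv : ∀ t, v t = ((v t).toReal : EReal) := fun t =>
    (EReal.coe_toReal (htop t) (ne_bot_of_le_ne_bot (EReal.coe_ne_bot m) (hm t))).symm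
  obtain ⟨l, hl, hdist⟩ :=
    _root_.exists_tendsto_of_sufficient_decrease (v := fun t => (v t).toReal) hα
    (fun t => by simpa [← EReal.coe_le_coe_iff, ← hv] using hm t)
    (fun t ht => by simpa [← EReal.coe_le_coe_iff, ← hv] using hdec t ht)
  refine ⟨l, ?_, hdist⟩
  simpa [Function.comp_def, ← hv] using (continuous_coe_real_ereal.tendsto l).comp hl

lemma tendsto_dist_add_of_tendsto_dist_succ
    (hu : Tendsto (fun n => dist (u (n + 1)) (u n)) atTop (𝓝 0)) (k : ℕ) :
    Tendsto (fun n => dist (u (n + k)) (u n)) atTop (𝓝 0) := by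
  induction k with
  | zero => simp
  | succ k ih =>
    refine squeeze_zero (fun _ => dist_nonneg) (fun n => dist_triangle _ (u (n + k)) _) ?_
    simpa [← add_assoc] using (hu.comp (tendsto_add_atTop_nat k)).add ih

lemma tendsto_dist_of_bounded_offset
    (hu : Tendsto (fun n => dist (u (n + 1)) (u n)) atTop (𝓝 0)) {a b : ℕ → ℕ} {c : ℕ}
    (ha : Tendsto a atTop atTop) (hab : ∀ m, a m ≤ b m ∧ b m ≤ a m + c) :
    Tendsto (fun m => dist (u (b m)) (u (a m))) atTop (𝓝 0) := by
  have hsum : Tendsto (fun m => ∑ k ∈ Finset.range (c + 1), dist (u (a m + k)) (u (a m)))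
      atTop (𝓝 0) := by
    simpa using tendsto_finsetSum (Finset.range (c + 1))
      fun k _ => (tendsto_dist_add_of_tendsto_dist_succ hu k).comp ha
  refine squeeze_zero (fun _ => dist_nonneg) (fun m => ?_) hsum
  obtain ⟨k, hk⟩ := Nat.exists_eq_add_of_le (hab m).1
  have := (hab m).2
  rw [hk]
  exact Finset.single_le_sum (f := fun k => dist (u (a m + k)) (u (a m)))
    (fun _ _ => dist_nonneg) (Finset.mem_range.2 (by omega))

lemma tendsto_comp_of_bounded_offset
    (hu : Tendsto (fun n => dist (u (n + 1)) (u n)) atTop (𝓝 0)) {φ b : ℕ → ℕ} {c : ℕ}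
    {x : E} (hφ : Tendsto φ atTop atTop) (hx : Tendsto (fun m => u (φ m)) atTop (𝓝 x))
    (hb : ∀ m, φ m ≤ b m + c ∧ b m ≤ φ m + c) : Tendsto (fun m => u (b m)) atTop (𝓝 x) := by
  have ha : Tendsto (fun m => min (φ m) (b m)) atTop atTop :=
    (tendsto_sub_atTop_nat c).comp (tendsto_atTop_mono
      (g := fun m => min (φ m) (b m) + c) (fun m => by have := hb m; omega) hφ)
      |>.congr fun m => Nat.add_sub_cancel _ _
  have hba := tendsto_dist_of_bounded_offset hu ha (b := b) (c := c) fun m => by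
    have := hb m; omega
  have hφa := tendsto_dist_of_bounded_offset hu ha (b := φ) (c := c) fun m => by
    have := hb m; omega
  rw [tendsto_iff_dist_tendsto_zero] at hx ⊢
  refine squeeze_zero (fun _ => dist_nonneg) (fun m => ?_)
    (by simpa using (hba.add hφa).add hx)
  linarith [dist_triangle (u (b m)) (u (min (φ m) (b m))) x,
    dist_triangle_left (u (min (φ m) (b m))) x (u (φ m))]

end Sequences

namespace PiLp

variable {ι : Type*} {q : ENNReal} {β : ι → Type*}

lemma tendsto_nhds_iff {α : Type*} [∀ i, TopologicalSpace (β i)] {l : Filter α}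
    {y : α → PiLp q β} {a : PiLp q β} :
    Tendsto y l (𝓝 a) ↔ ∀ i, Tendsto (fun m => y m i) l (𝓝 (a i)) := by
  rw [(PiLp.homeomorph q β).isInducing.tendsto_nhds_iff, tendsto_pi_nhds]
  rfl

lemma lowerSemicontinuous_coe_add_sum [Fintype ι] [∀ i, TopologicalSpace (β i)]
    {f : PiLp q β → ℝ} (hf : Continuous f) {g : ∀ i, β i → EReal}
    (hg : ∀ i, LowerSemicontinuous (g i)) (hbot : ∀ i z, g i z ≠ ⊥) :
    LowerSemicontinuous fun y : PiLp q β => (f y : EReal) + ∑ i, g i (y i) :=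
  (continuous_coe_real_ereal.comp hf).lowerSemicontinuous.add'
    (LowerSemicontinuous.ereal_finset_sum
      (fun i _ => (hg i).comp (PiLp.continuous_apply q β i)) fun i _ _ => hbot i _)
    fun _ => EReal.continuousAt_add (Or.inl (EReal.coe_ne_top _)) (Or.inl (EReal.coe_ne_bot _))

lemma tendsto_comp_of_delayed [Fintype ι] [Fact (1 ≤ q)] [∀ i, PseudoMetricSpace (β i)]
    {s : ℕ} {X Y : ℕ → PiLp q β} {σ : ι → ℕ → ℕ} (hσ_le : ∀ j t, σ j t ≤ t) (hσ_ge : ∀ j t, t ≤ σ j t + s)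
    (hY : ∀ t j, Y t j = X (σ j t) j)
    (hX : Tendsto (fun t => dist (X (t + 1)) (X t)) atTop (𝓝 0)) {k : ℕ → ℕ} {a : PiLp q β}
    (hk : Tendsto k atTop atTop) (hXk : Tendsto (fun m => X (k m)) atTop (𝓝 a)) :
    Tendsto (fun m => Y (k m)) atTop (𝓝 a) := by
  refine PiLp.tendsto_nhds_iff.2 fun j => ?_
  simp only [hY]
  exact ((PiLp.continuous_apply q β j).tendsto a).comp <|
    tendsto_comp_of_bounded_offset hX hk hXk
      fun m => ⟨hσ_ge j _, (hσ_le j _).trans (Nat.le_add_right _ _)⟩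

end PiLp

lemma exists_last_mem_window {α : Type*} {u : ℕ → α} {T : Set ℕ} {s t : ℕ}
    (hT : ∃ k ∈ T, t ≤ k ∧ k ≤ t + s) (hskip : ∀ n, n ∉ T → u (n + 1) = u n) :
    ∃ k ∈ T, t ≤ k ∧ k ≤ t + s ∧ u (t + s + 1) = u (k + 1) := by
  classical
  obtain ⟨k₀, hk₀T, htk₀, hk₀⟩ := hT
  set k := Nat.findGreatest (· ∈ T) (t + s)
  have hk : k ≤ t + s := Nat.findGreatest_le _
  refine ⟨k, Nat.findGreatest_spec hk₀ hk₀T, htk₀.trans (Nat.le_findGreatest hk₀ hk₀T), hk, ?_⟩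
  suffices ∀ n, k + 1 ≤ n → n ≤ t + s + 1 → u n = u (k + 1) from this _ (by omega) le_rfl
  intro n hn
  induction n, hn using Nat.le_induction with
  | base => exact fun _ => rfl
  | succ n hkn ih =>
    intro hn
    have hnT : n ∉ T :=
      Nat.findGreatest_is_greatest (P := (· ∈ T)) (n := t + s) (by omega) (by omega)
    rw [hskip n hnT, ih (by omega)]

section Prox

variable {E : Type*} [SeminormedAddCommGroup E] {g : E → EReal} {c : ℝ}

lemma ne_top_of_prox_updates {u w : ℕ → E} {T : Set ℕ}
    (hskip : ∀ t, t ∉ T → u (t + 1) = u t)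
    (hupd : ∀ t, t ∈ T → g (u (t + 1)) + ((c * ‖u (t + 1) - w t‖ ^ 2 : ℝ) : EReal)
      ≤ g (u t) + ((c * ‖u t - w t‖ ^ 2 : ℝ) : EReal))
    (h0 : g (u 0) ≠ ⊤) (t : ℕ) : g (u t) ≠ ⊤ := by
  induction t with
  | zero => exact h0
  | succ t ih =>
    by_cases ht : t ∈ T
    · exact ne_top_of_le_ne_top (EReal.add_ne_top ih (EReal.coe_ne_top _))
        (EReal.le_add_coe_sub_of_add_coe_le (hupd t ht))
    · rwa [hskip t ht]

lemma exists_le_add_tendsto_zero_of_prox {z w : ℕ → E} {a b : E}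
    (hz : Tendsto z atTop (𝓝 a)) (hw : Tendsto w atTop (𝓝 b))
    (hprox : ∀ m, g (z m) + ((c * ‖z m - w m‖ ^ 2 : ℝ) : EReal)
      ≤ g a + ((c * ‖a - w m‖ ^ 2 : ℝ) : EReal)) :
    ∃ D : ℕ → ℝ, Tendsto D atTop (𝓝 0) ∧ ∀ m, g (z m) ≤ g a + (D m : EReal) :=
  ⟨fun m => c * ‖a - w m‖ ^ 2 - c * ‖z m - w m‖ ^ 2,
    by simpa using ((((tendsto_const_nhds (x := a)).sub hw).norm.pow 2).const_mul c).sub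
        (((hz.sub hw).norm.pow 2).const_mul c),
    fun m => EReal.le_add_coe_sub_of_add_coe_le (hprox m)⟩

lemma exists_le_add_tendsto_zero_of_window {u w : ℕ → E} {T : Set ℕ} {s : ℕ}
    {φ : ℕ → ℕ} {a b : E} (hT : ∀ t, ∃ k ∈ T, t ≤ k ∧ k ≤ t + s)
    (hskip : ∀ t, t ∉ T → u (t + 1) = u t)
    (hupd : ∀ t, t ∈ T → g (u (t + 1)) + ((c * ‖u (t + 1) - w t‖ ^ 2 : ℝ) : EReal)
      ≤ g a + ((c * ‖a - w t‖ ^ 2 : ℝ) : EReal))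
    (hconv : ∀ k : ℕ → ℕ, (∀ m, φ m ≤ k m ∧ k m ≤ φ m + s) →
      Tendsto (fun m => u (k m + 1)) atTop (𝓝 a) ∧ Tendsto (fun m => w (k m)) atTop (𝓝 b)) :
    ∃ D : ℕ → ℝ, Tendsto D atTop (𝓝 0) ∧
      ∀ m, g (u (φ m + s + 1)) ≤ g a + (D m : EReal) := by
  choose k hkT hk hk' hkeq using fun m => exists_last_mem_window (hT (φ m)) hskip
  obtain ⟨hu, hw⟩ := hconv k fun m => ⟨hk m, hk' m⟩
  obtain ⟨D, hD, hle⟩ := exists_le_add_tendsto_zero_of_prox hu hw fun m => hupd _ (hkT m)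
  exact ⟨D, hD, fun m => hkeq m ▸ hle m⟩

end Prox

theorem stmt_13_general
    (p s : ℕ) (d : Fin p → ℕ)
    (τ : Fin p → Fin p → ℕ → ℕ)
    (hτ_le : ∀ i j t, τ i j t ≤ t)
    (hτ_ge : ∀ i j t, t ≤ τ i j t + s)
    (x : (i : Fin p) → ℕ → EuclideanSpace ℝ (Fin (d i)))
    (X : ℕ → EE p d) (hX : ∀ t i, X t i = x i t)
    (Xl : Fin p → ℕ → EE p d) (hXl : ∀ i t j, Xl i t j = x j (τ i j t))
    (T : Fin p → Set ℕ)
    (hT : ∀ i t, ∃ k ∈ T i, t ≤ k ∧ k ≤ t + s)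
    (η L : ℝ)
    (f : EE p d → ℝ) (f' : EE p d → EE p d)
    (hf : ∀ y, HasGradientAt f (f' y) y)
    (hlip : ∀ y z, ‖f' y - f' z‖ ≤ L * ‖y - z‖)
    (g : (i : Fin p) → EuclideanSpace ℝ (Fin (d i)) → EReal)
    (hg_nebot : ∀ i z, g i z ≠ ⊥)
    (hg_lsc : ∀ i, LowerSemicontinuous (g i))
    (F : EE p d → EReal)
    (hF : ∀ y, F y = (f y : EReal) + ∑ i, g i (y i))
    (hF_bdd : ∃ m : ℝ, ∀ y, (m : EReal) ≤ F y)
    (hF0 : F (X 0) < ⊤)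
    (hskip : ∀ i t, t ∉ T i → x i (t + 1) = x i t)
    (hupd : ∀ i t, t ∈ T i → ∀ z : EuclideanSpace ℝ (Fin (d i)),
      g i (x i (t + 1)) +
        ((1 / (2 * η) * ‖x i (t + 1) - (x i t - η • f' (Xl i t) i)‖ ^ 2 : ℝ) : EReal)
      ≤ g i z + ((1 / (2 * η) * ‖z - (x i t - η • f' (Xl i t) i)‖ ^ 2 : ℝ) : EReal))
    (α : ℝ) (hα : 0 < α) (T₀ : ℕ)
    (hsd : ∀ t, T₀ ≤ t →
      F (X (t + 1)) + ((α * ‖X (t + 1) - X t‖ ^ 2 : ℝ) : EReal) ≤ F (X t)) :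
    ∃ Fstar : ℝ,
      Tendsto (fun t => F (X t)) atTop (𝓝 ((Fstar : ℝ) : EReal)) ∧
      ∀ xstar : EE p d,
        (∃ φ : ℕ → ℕ, StrictMono φ ∧ Tendsto (fun m => X (φ m)) atTop (𝓝 xstar)) →
        F xstar = ((Fstar : ℝ) : EReal) := by
  obtain ⟨m, hm⟩ := hF_bdd
  have hfc : Continuous f := continuous_iff_continuousAt.2 fun y => (hf y).continuousAt
  have hf'c : Continuous f' := (LipschitzWith.of_dist_le' (K := L) fun y z => by
    simpa only [dist_eq_norm] using hlip y z).continuous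
  have hF_ne_top_iff (y : EE p d) : F y ≠ ⊤ ↔ ∀ i, g i (y i) ≠ ⊤ := by
    rw [hF]
    exact EReal.coe_add_sum_ne_top_iff fun i => hg_nebot i _
  have hF_ne_top (t : ℕ) : F (X t) ≠ ⊤ := (hF_ne_top_iff _).2 fun i => by
    simpa only [hX] using ne_top_of_prox_updates (hskip i) (fun t ht => hupd i t ht _)
      (by simpa only [hX] using (hF_ne_top_iff _).1 hF0.ne i) t
  obtain ⟨Fstar, hFlim, hdist⟩ := EReal.exists_tendsto_of_sufficient_decrease (u := X) hα
    (fun t => hm (X t)) hF_ne_top fun t ht => by simpa only [dist_eq_norm] using hsd t ht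
  refine ⟨Fstar, hFlim, fun xstar ⟨φ, hφ, hxφ⟩ => le_antisymm ?_ ?_⟩
  · have hFlsc : LowerSemicontinuous F := by
      simpa only [← hF] using PiLp.lowerSemicontinuous_coe_add_sum hfc hg_lsc hg_nebot
    exact hFlsc.le_of_tendsto hxφ (hFlim.comp hφ.tendsto_atTop)
  have hnear (b : ℕ → ℕ) (hb : ∀ m, φ m ≤ b m + (s + 1) ∧ b m ≤ φ m + (s + 1)) :
      Tendsto (fun m => X (b m)) atTop (𝓝 xstar) :=
    tendsto_comp_of_bounded_offset hdist hφ.tendsto_atTop hxφ hb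
  rw [hF]
  refine EReal.le_coe_add_sum_of_le_add_tendsto_zero (h := fun i m => g i (X (φ m + s + 1) i))
    ((hfc.tendsto _).comp (hnear (fun m => φ m + s + 1) fun m => by omega))
    (by simpa only [Function.comp_def, hF] using
      hFlim.comp (tendsto_atTop_mono (fun m => by omega) hφ.tendsto_atTop)) fun i => ?_
  simp only [hX]
  refine exists_le_add_tendsto_zero_of_window (c := 1 / (2 * η))
    (b := xstar i - η • f' xstar i) (hT i) (hskip i) (fun t ht => hupd i t ht (xstar i))
    fun k hk => ⟨?_, ?_⟩
  · have hXk1 := hnear (k · + 1) fun m => by have := hk m; omega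
    simpa only [hX] using PiLp.tendsto_nhds_iff.1 hXk1 i
  · have hXk := hnear k fun m => by have := hk m; omega
    have hXlk := PiLp.tendsto_comp_of_delayed (hτ_le i) (hτ_ge i) (fun t j => by rw [hXl, hX])
      hdist (tendsto_atTop_mono (fun m => (hk m).1) hφ.tendsto_atTop) hXk
    have hgrad := PiLp.tendsto_nhds_iff.1 ((hf'c.tendsto _).comp hXlk) i
    simpa only [Function.comp_apply, hX] using
      (PiLp.tendsto_nhds_iff.1 hXk i).sub (hgrad.const_smul η)

theorem stmt_13
    (p s : ℕ) (hp : 1 ≤ p) (d : Fin p → ℕ) (hd : ∀ i, 1 ≤ d i)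
    (τ : Fin p → Fin p → ℕ → ℕ)
    (hτ_le : ∀ i j t, τ i j t ≤ t)
    (hτ_ge : ∀ i j t, t ≤ τ i j t + s)
    (hτ_self : ∀ i t, τ i i t = t)
    (x : (i : Fin p) → ℕ → EuclideanSpace ℝ (Fin (d i)))
    (X : ℕ → EE p d) (hX : ∀ t i, X t i = x i t)
    (Xl : Fin p → ℕ → EE p d) (hXl : ∀ i t j, Xl i t j = x j (τ i j t))
    (T : Fin p → Set ℕ)
    (hT : ∀ i t, ∃ k ∈ T i, t ≤ k ∧ k ≤ t + s)
    (η L : ℝ) (hη : 0 < η) (hL : 0 < L)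
    (f : EE p d → ℝ) (f' : EE p d → EE p d)
    (hf : ∀ y, HasGradientAt f (f' y) y)
    (hlip : ∀ y z, ‖f' y - f' z‖ ≤ L * ‖y - z‖)
    (g : (i : Fin p) → EuclideanSpace ℝ (Fin (d i)) → EReal)
    (hg_nebot : ∀ i z, g i z ≠ ⊥)
    (hg_proper : ∀ i, ∃ z, g i z ≠ ⊤)
    (hg_lsc : ∀ i, LowerSemicontinuous (g i))
    (F : EE p d → EReal)
    (hF : ∀ y, F y = (f y : EReal) + ∑ i, g i (y i))
    (hF_bdd : ∃ m : ℝ, ∀ y, (m : EReal) ≤ F y)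
    (hF0 : F (X 0) < ⊤)
    (hskip : ∀ i t, t ∉ T i → x i (t + 1) = x i t)
    (hupd : ∀ i t, t ∈ T i → ∀ z : EuclideanSpace ℝ (Fin (d i)),
      g i (x i (t + 1)) +
        ((1 / (2 * η) * ‖x i (t + 1) - (x i t - η • f' (Xl i t) i)‖ ^ 2 : ℝ) : EReal)
      ≤ g i z + ((1 / (2 * η) * ‖z - (x i t - η • f' (Xl i t) i)‖ ^ 2 : ℝ) : EReal))
    (hstep : η < 1 / (L * (1 + 2 * Real.sqrt p * s)))
    (R : ℝ) (hbdd : ∀ t, ‖X t‖ ≤ R)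
    (α : ℝ) (hα : 0 < α) (T₀ : ℕ)
    (hsd : ∀ t, T₀ ≤ t →
      F (X (t + 1)) + ((α * ‖X (t + 1) - X t‖ ^ 2 : ℝ) : EReal) ≤ F (X t)) :
    ∃ Fstar : ℝ,
      Tendsto (fun t => F (X t)) atTop (𝓝 ((Fstar : ℝ) : EReal)) ∧
      ∀ xstar : EE p d,
        (∃ φ : ℕ → ℕ, StrictMono φ ∧ Tendsto (fun m => X (φ m)) atTop (𝓝 xstar)) →
        F xstar = ((Fstar : ℝ) : EReal) :=
  stmt_13_general p s d τ hτ_le hτ_ge x X hX Xl hXl T hT η L f f' hf hlip g hg_nebot hg_lsc F hF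
    hF_bdd hF0 hskip hupd α hα T₀ hsd
end

section
/- Let V be a real normed vector space, let s ≥ 1 be an integer, let r > 1, and set C = (r^{s+1} − 1)/(r − 1). Let y : ℕ → V be a sequence for which there exists T ∈ ℕ such that for all t ≥ T, Σ_{k=(t−s)_+}^{t} ‖y(k+1) − y(k)‖ ≥ C·‖y(t+1) − y(t)‖. Then the sequence has finite length: Σ_{t=0}^{∞} ‖y(t+1) − y(t)‖ < ∞. -/
open Filter Topology

/-!
Write `a t = ‖y (t + 1) - y t‖` and `P n = ∑ k < n, a k`. After enlarging `T` so that `s ≤ T`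
(then no window `[t - s, t]` is truncated at `0`), summing the hypothesis over `T ≤ t < n`
counts every `a k` with `k < n` at most `s + 1` times, so `C (P n - P T) ≤ (s + 1) P n`.
Since `C = 1 + r + ⋯ + r ^ s > s + 1`, the partial sums are bounded by `C P T / (C - (s + 1))`.
-/

open Finset

theorem succ_lt_geom_sum {r : ℝ} (hr : 1 < r) {s : ℕ} (hs : 1 ≤ s) :
    (s + 1 : ℝ) < ∑ i ∈ range (s + 1), r ^ i := by
  calc (s + 1 : ℝ) = ∑ _i ∈ range (s + 1), (1 : ℝ) := by simp
    _ < ∑ i ∈ range (s + 1), r ^ i :=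
      sum_lt_sum (fun i _ => one_le_pow₀ hr.le) ⟨1, mem_range.mpr (by omega), by simpa using hr⟩

section Windows

variable {a : ℕ → ℝ} {s : ℕ}

theorem sum_Ico_window_eq {t : ℕ} (hst : s ≤ t) :
    ∑ k ∈ Ico (t - s) (t + 1), a k = ∑ j ∈ range (s + 1), a (t - s + j) := by
  rw [sum_Ico_eq_sum_range, show t + 1 - (t - s) = s + 1 by omega]

theorem sum_Ico_comp_sub_add_le_sum_range (ha : ∀ k, 0 ≤ a k) {T : ℕ} (hsT : s ≤ T)
    {j : ℕ} (hj : j ≤ s) (n : ℕ) :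
    ∑ t ∈ Ico T n, a (t - s + j) ≤ ∑ k ∈ range n, a k := by
  have hinj : Set.InjOn (fun t => t - s + j) (Ico T n) := by
    intro t ht u hu htu
    simp only [coe_Ico, Set.mem_Ico] at ht hu htu
    omega
  rw [← sum_image hinj]
  refine sum_le_sum_of_subset_of_nonneg ?_ fun k _ _ => ha k
  intro k hk
  simp only [mem_image, mem_Ico] at hk
  simp only [mem_range]
  omega

theorem sum_windows_le (ha : ∀ k, 0 ≤ a k) {T : ℕ} (hsT : s ≤ T) (n : ℕ) :
    ∑ t ∈ Ico T n, ∑ k ∈ Ico (t - s) (t + 1), a k ≤ (s + 1) * ∑ k ∈ range n, a k := by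
  calc ∑ t ∈ Ico T n, ∑ k ∈ Ico (t - s) (t + 1), a k
      = ∑ j ∈ range (s + 1), ∑ t ∈ Ico T n, a (t - s + j) := by
        rw [sum_comm]
        exact sum_congr rfl fun t ht => sum_Ico_window_eq (hsT.trans (mem_Ico.mp ht).1)
    _ ≤ ∑ _j ∈ range (s + 1), ∑ k ∈ range n, a k :=
        sum_le_sum fun j hj =>
          sum_Ico_comp_sub_add_le_sum_range ha hsT (Nat.lt_succ_iff.mp (mem_range.mp hj)) n
    _ = (s + 1) * ∑ k ∈ range n, a k := by simp

theorem summable_of_mul_le_sum_window (ha : ∀ k, 0 ≤ a k) {C : ℝ} (hC : (s + 1 : ℝ) < C)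
    {T : ℕ} (hT : ∀ t, T ≤ t → C * a t ≤ ∑ k ∈ Ico (t - s) (t + 1), a k) : Summable a := by
  set T' := T + s
  set M := ∑ k ∈ range T', a k
  have hgap : 0 < C - (s + 1) := by linarith
  refine summable_of_sum_range_le (c := C * M / (C - (s + 1))) ha fun n => ?_
  have hmono : ∑ k ∈ range n, a k ≤ ∑ k ∈ range (max n T'), a k :=
    sum_le_sum_of_subset_of_nonneg (range_subset_range.mpr (le_max_left n T'))
      fun k _ _ => ha k
  refine hmono.trans ?_
  set m := max n T'
  have hsplit : ∑ k ∈ range m, a k = M + ∑ t ∈ Ico T' m, a t :=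
    (sum_range_add_sum_Ico a (le_max_right n T')).symm
  have hmain : C * ∑ t ∈ Ico T' m, a t ≤ (s + 1) * ∑ k ∈ range m, a k :=
    calc C * ∑ t ∈ Ico T' m, a t
        ≤ ∑ t ∈ Ico T' m, ∑ k ∈ Ico (t - s) (t + 1), a k := by
          rw [mul_sum]
          exact sum_le_sum fun t ht => hT t (by have := (mem_Ico.mp ht).1; omega)
      _ ≤ (s + 1) * ∑ k ∈ range m, a k := sum_windows_le ha (Nat.le_add_left s T) m
  rw [le_div_iff₀ hgap, hsplit]
  rw [hsplit] at hmain
  linarith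

end Windows

theorem stmt_14_general
    (V : Type*) [NormedAddCommGroup V]
    (s : ℕ) (hs : 1 ≤ s) (r : ℝ) (hr : 1 < r)
    (C : ℝ) (hC : C = (r ^ (s + 1) - 1) / (r - 1))
    (y : ℕ → V) (T : ℕ)
    (hT : ∀ t : ℕ, T ≤ t →
      C * ‖y (t + 1) - y t‖ ≤ ∑ k ∈ Finset.Ico (t - s) (t + 1), ‖y (k + 1) - y k‖) :
    Summable (fun t => ‖y (t + 1) - y t‖) := by
  have hCgeom : C = ∑ i ∈ range (s + 1), r ^ i := by
    rw [hC, geom_sum_eq hr.ne']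
  exact summable_of_mul_le_sum_window (fun _ => norm_nonneg _)
    (hCgeom ▸ succ_lt_geom_sum hr hs) hT

theorem stmt_14
    (V : Type*) [NormedAddCommGroup V] [NormedSpace ℝ V]
    (s : ℕ) (hs : 1 ≤ s) (r : ℝ) (hr : 1 < r)
    (C : ℝ) (hC : C = (r ^ (s + 1) - 1) / (r - 1))
    (y : ℕ → V) (T : ℕ)
    (hT : ∀ t : ℕ, T ≤ t →
      C * ‖y (t + 1) - y t‖ ≤ ∑ k ∈ Finset.Ico (t - s) (t + 1), ‖y (k + 1) - y k‖) :
    Summable (fun t => ‖y (t + 1) - y t‖) :=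
  stmt_14_general V s hs r hr C hC y T hT
end

section
/- Let Δ : E → E be a map, let L_η ≥ 0, and suppose: (i) for every i ∈ {1, …, p} and every t ∈ ℕ, x_i(t+1) = x_i(t) + (Δ(x^i(t)))_i, where (·)_i denotes the i-th block; and (ii) for every i and t, ‖Δ(x^i(t)) − Δ(x^i(t+1))‖ ≤ L_η·‖x^i(t) − x^i(t+1)‖. Then for every t ∈ ℕ: ‖x(t+1) − x(t)‖² − ‖x(t+2) − x(t+1)‖² ≤ 2p·L_η·‖x(t+1) − x(t)‖ · Σ_{k=(t−s)_+}^{t} ‖x(k+1) − x(k)‖. -/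
set_option maxHeartbeats 1000000


open Filter Topology

lemma tele_aux {V : Type*} [NormedAddCommGroup V] (f : ℕ → V) {a b : ℕ} (h : a ≤ b) :
    ‖f b - f a‖ ≤ ∑ k ∈ Finset.Ico a b, ‖f (k + 1) - f k‖ := by
  induction b, h using Nat.le_induction with
  | base => simp
  | succ n hn ih =>
    rw [Finset.sum_Ico_succ_top (by omega)]
    have he : f (n + 1) - f a = (f n - f a) + (f (n + 1) - f n) := by abel
    calc ‖f (n + 1) - f a‖ = ‖(f n - f a) + (f (n + 1) - f n)‖ := by rw [he]
    _ ≤ ‖f n - f a‖ + ‖f (n + 1) - f n‖ := norm_add_le _ _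
    _ ≤ _ := by linarith

lemma tele_gen {V : Type*} [NormedAddCommGroup V] (f : ℕ → V) {m a b N : ℕ}
    (hma : m ≤ a) (haN : a ≤ N) (hmb : m ≤ b) (hbN : b ≤ N) :
    ‖f a - f b‖ ≤ ∑ k ∈ Finset.Ico m N, ‖f (k + 1) - f k‖ := by
  have key : ∀ u v : ℕ, m ≤ u → u ≤ v → v ≤ N →
      ‖f v - f u‖ ≤ ∑ k ∈ Finset.Ico m N, ‖f (k + 1) - f k‖ := by
    intro u v hmu huv hvN
    refine (tele_aux f huv).trans ?_
    exact Finset.sum_le_sum_of_subset_of_nonneg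
      (Finset.Ico_subset_Ico hmu hvN) (fun _ _ _ => norm_nonneg _)
  rcases le_total a b with h | h
  · rw [norm_sub_rev]; exact key a b hma h hbN
  · exact key b a hmb h haN

lemma blk_le {p : ℕ} {d : Fin p → ℕ} (v : EE p d) (i : Fin p) : ‖v i‖ ≤ ‖v‖ := by
  have h : ‖v i‖ ^ 2 ≤ ‖v‖ ^ 2 := by
    conv_rhs => rw [PiLp.norm_sq_eq_of_L2]
    exact Finset.single_le_sum (f := fun j => ‖v j‖ ^ 2)
      (fun j _ => sq_nonneg _) (Finset.mem_univ i)
  exact le_of_pow_le_pow_left₀ two_ne_zero (norm_nonneg _) h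

theorem stmt_15
    (p s : ℕ) (hp : 1 ≤ p) (d : Fin p → ℕ) (hd : ∀ i, 1 ≤ d i)
    (τ : Fin p → Fin p → ℕ → ℕ)
    (hτ_le : ∀ i j t, τ i j t ≤ t)
    (hτ_ge : ∀ i j t, t ≤ τ i j t + s)
    (hτ_self : ∀ i t, τ i i t = t)
    (x : (i : Fin p) → ℕ → EuclideanSpace ℝ (Fin (d i)))
    (X : ℕ → EE p d) (hX : ∀ t i, X t i = x i t)
    (Xl : Fin p → ℕ → EE p d) (hXl : ∀ i t j, Xl i t j = x j (τ i j t))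
    (Δ : EE p d → EE p d) (Lη : ℝ) (hLη : 0 ≤ Lη)
    (hupd : ∀ (i : Fin p) (t : ℕ), x i (t + 1) = x i t + Δ (Xl i t) i)
    (hΔlip : ∀ (i : Fin p) (t : ℕ),
      ‖Δ (Xl i t) - Δ (Xl i (t + 1))‖ ≤ Lη * ‖Xl i t - Xl i (t + 1)‖) :
    ∀ t : ℕ,
      ‖X (t + 1) - X t‖ ^ 2 - ‖X (t + 2) - X (t + 1)‖ ^ 2 ≤
        2 * p * Lη * ‖X (t + 1) - X t‖ *
          ∑ k ∈ Finset.Ico (t - s) (t + 1), ‖X (k + 1) - X k‖ := by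
  intro t
  set S : ℝ := ∑ k ∈ Finset.Ico (t - s) (t + 1), ‖X (k + 1) - X k‖ with hSdef
  have hS : 0 ≤ S := Finset.sum_nonneg (fun _ _ => norm_nonneg _)
  set a : ℝ := ‖X (t + 1) - X t‖ with hadef
  set b : ℝ := ‖X (t + 2) - X (t + 1)‖ with hbdef
  have ha : 0 ≤ a := norm_nonneg _
  have hb : 0 ≤ b := norm_nonneg _
  have hp' : (1 : ℝ) ≤ (p : ℝ) := by exact_mod_cast hp
  -- block differences of X are block differences of x
  have hXblk : ∀ (k : ℕ) (j : Fin p), (X (k + 1) - X k) j = x j (k + 1) - x j k := by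
    intro k j
    rw [PiLp.sub_apply, hX, hX]
  -- each block step is bounded by S-summand
  have hstep : ∀ (j : Fin p) (u v : ℕ), t - s ≤ u → u ≤ t + 1 → t - s ≤ v → v ≤ t + 1 →
      ‖x j u - x j v‖ ≤ S := by
    intro j u v h1 h2 h3 h4
    refine (tele_gen (fun k => x j k) h1 h2 h3 h4).trans ?_
    refine Finset.sum_le_sum (fun k _ => ?_)
    calc ‖x j (k + 1) - x j k‖ = ‖(X (k + 1) - X k) j‖ := by rw [hXblk]
    _ ≤ ‖X (k + 1) - X k‖ := blk_le _ _
  -- bound on the local model differences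
  have hw : ∀ i : Fin p, ‖Xl i t - Xl i (t + 1)‖ ^ 2 ≤ p * S ^ 2 := by
    intro i
    rw [PiLp.norm_sq_eq_of_L2]
    calc ∑ j, ‖(Xl i t - Xl i (t + 1)) j‖ ^ 2 ≤ ∑ _j : Fin p, S ^ 2 := by
          refine Finset.sum_le_sum (fun j _ => ?_)
          have : ‖(Xl i t - Xl i (t + 1)) j‖ ≤ S := by
            rw [PiLp.sub_apply, hXl, hXl]
            refine hstep j _ _ ?_ ?_ ?_ ?_
            · have := hτ_ge i j t; omega
            · have := hτ_le i j t; omega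
            · have := hτ_ge i j (t + 1); omega
            · exact hτ_le i j (t + 1)
          exact pow_le_pow_left₀ (norm_nonneg _) this 2
    _ = p * S ^ 2 := by simp [Finset.sum_const, mul_comm]
  -- the difference of consecutive increments
  set D : EE p d := (X (t + 1) - X t) - (X (t + 2) - X (t + 1)) with hDdef
  have hDblk : ∀ i : Fin p, D i = (Δ (Xl i t) - Δ (Xl i (t + 1))) i := by
    intro i
    have h1 : x i (t + 1) = x i t + Δ (Xl i t) i := hupd i t
    have h2 : x i (t + 2) = x i (t + 1) + Δ (Xl i (t + 1)) i := hupd i (t + 1)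
    simp only [hDdef, PiLp.sub_apply, hX]
    rw [h2, h1]
    abel
  have hD : ‖D‖ ≤ Lη * p * S := by
    have hsq : ‖D‖ ^ 2 ≤ (Lη * p * S) ^ 2 := by
      rw [PiLp.norm_sq_eq_of_L2]
      calc ∑ i, ‖D i‖ ^ 2 ≤ ∑ _i : Fin p, Lη ^ 2 * (p * S ^ 2) := by
            refine Finset.sum_le_sum (fun i _ => ?_)
            have h1 : ‖D i‖ ≤ Lη * ‖Xl i t - Xl i (t + 1)‖ := by
              rw [hDblk i]
              exact (blk_le _ _).trans (hΔlip i t)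
            have h2 : ‖D i‖ ^ 2 ≤ Lη ^ 2 * ‖Xl i t - Xl i (t + 1)‖ ^ 2 := by
              have := pow_le_pow_left₀ (norm_nonneg _) h1 2
              calc ‖D i‖ ^ 2 ≤ (Lη * ‖Xl i t - Xl i (t + 1)‖) ^ 2 := this
              _ = Lη ^ 2 * ‖Xl i t - Xl i (t + 1)‖ ^ 2 := by ring
            refine h2.trans ?_
            exact mul_le_mul_of_nonneg_left (hw i) (sq_nonneg _)
      _ = (Lη * p * S) ^ 2 := by
            simp [Finset.sum_const]
            ring
    have hnn : (0:ℝ) ≤ Lη * p * S := mul_nonneg (mul_nonneg hLη (Nat.cast_nonneg p)) hS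
    exact le_of_pow_le_pow_left₀ (n := 2) (by norm_num) hnn hsq
  rw [hDdef] at hD
  clear_value S a b D
  by_cases hab : a ≤ b
  · have h1 : a ^ 2 ≤ b ^ 2 := pow_le_pow_left₀ ha hab 2
    have h2 : (0 : ℝ) ≤ 2 * p * Lη * a * S :=
      mul_nonneg (mul_nonneg (mul_nonneg
        (mul_nonneg (by norm_num) (Nat.cast_nonneg p)) hLη) ha) hS
    linarith
  · push_neg at hab
    have hsub : a - b ≤ Lη * p * S := by
      rw [hadef, hbdef]
      exact (norm_sub_norm_le _ _).trans hD
    nlinarith [mul_nonneg (mul_nonneg hLη (le_trans zero_le_one hp')) hS,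
      mul_le_mul_of_nonneg_right hsub (by linarith : (0:ℝ) ≤ a + b)]
end
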